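/- arXiv:1512.04713 — 6 statements merged into one kernel-verified Lean document; each statement's English description precedes it below -/
import Mathlib

section
/- If E is an infinite-dimensional Banach space and 1 ≤ p < ∞, then ℓ_p(E) is not closed in ℓ_p^w(E) with respect to the weak ℓ_p norm. -/
open Filter

noncomputable section

section Defs

variable {E : Type*}

/-- `x ∈ ℓ_p(E)`: absolutely `p`-summable sequences. -/
def MemLpSeq [NormedAddCommGroup E] (p : ℝ) (x : ℕ → E) : Prop :=
  Summable fun j => ‖x j‖ ^ p

/-- The `ℓ_p` norm `(Σ ‖x j‖^p)^(1/p)`. -/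
def lpNorm [NormedAddCommGroup E] (p : ℝ) (x : ℕ → E) : ℝ :=
  (∑' j, ‖x j‖ ^ p) ^ (1 / p)

/-- `x ∈ ℓ_p^w(E)`: weakly `p`-summable sequences. -/
def WSummable [NormedAddCommGroup E] [NormedSpace ℝ E] (p : ℝ) (x : ℕ → E) : Prop :=
  ∀ f : E →L[ℝ] ℝ, Summable fun j => |f (x j)| ^ p

/-- The weak `ℓ_p` norm `sup_{‖f‖ ≤ 1} (Σ |f (x j)|^p)^(1/p)`. -/
def wNorm [NormedAddCommGroup E] [NormedSpace ℝ E] (p : ℝ) (x : ℕ → E) : ℝ :=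
  ⨆ f : {f : E →L[ℝ] ℝ // ‖f‖ ≤ 1}, (∑' j, |f.1 (x j)| ^ p) ^ (1 / p)

/-- `x ∈ ℓ_p^{mid}(E)`: mid `p`-summable sequences. -/
def MidSummable [NormedAddCommGroup E] [NormedSpace ℝ E] (p : ℝ) (x : ℕ → E) : Prop :=
  WSummable p x ∧ ∀ xs : ℕ → E →L[ℝ] ℝ, WSummable p xs →
    Summable fun nj : ℕ × ℕ => |xs nj.1 (x nj.2)| ^ p

/-- The mid `ℓ_p` norm: sup over the unit ball of `ℓ_p^w(E*)` of the double `ℓ_p` sum. -/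
def midNorm [NormedAddCommGroup E] [NormedSpace ℝ E] (p : ℝ) (x : ℕ → E) : ℝ :=
  ⨆ xs : {xs : ℕ → E →L[ℝ] ℝ // WSummable p xs ∧ wNorm p xs ≤ 1},
    (∑' nj : ℕ × ℕ, |xs.1 nj.1 (x nj.2)| ^ p) ^ (1 / p)

/-- `x ∈ ℓ_p^u(E)`: unconditionally `p`-summable sequences (weak norms of tails tend to 0). -/
def USummable [NormedAddCommGroup E] [NormedSpace ℝ E] (p : ℝ) (x : ℕ → E) : Prop :=
  WSummable p x ∧ Tendsto (fun k => wNorm p fun j => x (j + k)) atTop (nhds 0)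

/-- `x ∈ c₀₀(E)`: finitely supported sequences. -/
def FinSupp [Zero E] (x : ℕ → E) : Prop := ∃ N, ∀ j ≥ N, x j = 0

/-- Truncation of a sequence at index `k`. -/
def trunc [Zero E] (k : ℕ) (x : ℕ → E) : ℕ → E := fun j => if j < k then x j else 0

end Defs

/-!
An infinite-dimensional `E` contains, for every `n`, vectors `y₁, …, yₙ` with
`2/5 ≤ ‖yᵢ‖ ≤ 1` and `∑ f(yᵢ)² ≤ ‖f‖²` for every functional `f` (Dvoretzky–Rogers). They are
found in a `2n`-dimensional subspace `F`: take `T : ℓ₂^{2n} → F` of norm `≤ 1` maximising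
`|det T|` (relative to a fixed identification). If `T` were shorter than `2/5` on the unit sphere
of a subspace `V` of dimension `> n`, then `(5/7) • T ∘ (1 + P_V)` would still have norm `≤ 1`
but determinant `(5/7)^{2n} 2^{dim V} det T`, which is larger. So `T` is long on `n` orthonormal
vectors `uᵢ`, and Bessel's inequality for `f ∘ T` bounds `∑ f(T uᵢ)²` by `‖f‖²`.

Scaling a family of `4^m` such vectors by `4^{-m/p}` gives a block of `ℓ_p`-mass `≥ (2/5)^p`
whose weak `ℓ_p`-mass is `≤ ‖f‖^p 2^{-m}` (Cauchy–Schwarz). Concatenating the blocks gives a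
weakly `p`-summable sequence that is not in `ℓ_p(E)`, while its truncations after the first `n`
blocks lie in `ℓ_p(E)` and are within `(2^{1-n})^{1/p}` of it in the weak `ℓ_p` norm.
-/

open Module

section DvoretzkyRogers

variable {H F : Type*} [NormedAddCommGroup H] [InnerProductSpace ℝ H]
  [NormedAddCommGroup F] [NormedSpace ℝ F]

theorem Submodule.det_id_add_starProjection [FiniteDimensional ℝ H] (V : Submodule ℝ H) :
    (ContinuousLinearMap.id ℝ H + V.starProjection).det = 2 ^ finrank ℝ V := by
  let e := V.prodEquivOfIsCompl _ V.isCompl_orthogonal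
  have hconj : e.symm.toLinearMap ∘ₗ (ContinuousLinearMap.id ℝ H + V.starProjection).toLinearMap
      ∘ₗ e.symm.symm.toLinearMap = LinearMap.prodMap ((2 : ℝ) • LinearMap.id) LinearMap.id := by
    apply (LinearMap.cancel_left e.symm.symm.injective).1
    ext v
    · simp [e, two_smul, Submodule.starProjection_mem_subspace_eq_self]
    · simp [e, (Submodule.starProjection_apply_eq_zero_iff V).2 v.2]
  rw [ContinuousLinearMap.det, ← LinearMap.det_conj _ e.symm, hconj, LinearMap.det_prodMap,
    LinearMap.det_smul]
  simp

theorem Orthonormal.sum_sq_apply_le [CompleteSpace H] {ι : Type*} {v : ι → H}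
    (hv : Orthonormal ℝ v) (g : H →L[ℝ] ℝ) (s : Finset ι) :
    ∑ i ∈ s, g (v i) ^ 2 ≤ ‖g‖ ^ 2 := by
  set a := (InnerProductSpace.toDual ℝ H).symm g
  have hg : ∀ x, inner ℝ x a = g x := fun x => by
    rw [real_inner_comm, InnerProductSpace.toDual_symm_apply]
  have h := hv.sum_inner_products_le a (s := s)
  simpa only [Real.norm_eq_abs, sq_abs, hg, a, LinearIsometryEquiv.norm_map] using h

theorem exists_isMaxOn_abs_det [FiniteDimensional ℝ H] [FiniteDimensional ℝ F] (J : F ≃L[ℝ] H) :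
    ∃ T ∈ Metric.closedBall (0 : H →L[ℝ] F) 1, 0 < |((J : F →L[ℝ] H) ∘L T).det| ∧
      IsMaxOn (fun S : H →L[ℝ] F => |((J : F →L[ℝ] H) ∘L S).det|) (Metric.closedBall 0 1) T := by
  set c := (‖(J.symm : H →L[ℝ] F)‖ + 1)⁻¹
  have hc : 0 < c := by positivity
  have hT₀ : c • (J.symm : H →L[ℝ] F) ∈ Metric.closedBall (0 : H →L[ℝ] F) 1 := by
    rw [mem_closedBall_zero_iff, norm_smul, Real.norm_of_nonneg hc.le,
      inv_mul_le_one₀ (by positivity)]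
    linarith
  have hdet₀ : 0 < |((J : F →L[ℝ] H) ∘L (c • (J.symm : H →L[ℝ] F))).det| := by
    have : (J : F →L[ℝ] H) ∘L (c • (J.symm : H →L[ℝ] F)) = c • ContinuousLinearMap.id ℝ H := by
      ext x; simp
    rw [this, ContinuousLinearMap.det, ContinuousLinearMap.toLinearMap_smul, LinearMap.det_smul]
    simp [hc.ne']
  obtain ⟨T, hT, hmax⟩ := (isCompact_closedBall (0 : H →L[ℝ] F) 1).exists_isMaxOn ⟨_, hT₀⟩
    (ContinuousLinearMap.continuous_det.comp
      ((ContinuousLinearMap.compL ℝ H F H (J : F →L[ℝ] H)).continuous)).abs.continuousOn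
  exact ⟨T, hT, hdet₀.trans_le (hmax hT₀), hmax⟩

theorem exists_norm_eq_one_le_norm_apply [FiniteDimensional ℝ H] (J : F →L[ℝ] H) {T : H →L[ℝ] F}
    (hT : ‖T‖ ≤ 1) (hdet : 0 < |(J ∘L T).det|)
    (hmax : IsMaxOn (fun S : H →L[ℝ] F => |(J ∘L S).det|) (Metric.closedBall 0 1) T)
    (V : Submodule ℝ H) (hV : (7 / 5 : ℝ) ^ finrank ℝ H < 2 ^ finrank ℝ V) :
    ∃ w ∈ V, ‖w‖ = 1 ∧ 2 / 5 ≤ ‖T w‖ := by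
  by_contra! hsmall
  have hTV : ‖T ∘L V.starProjection‖ ≤ 2 / 5 :=
    calc ‖T ∘L V.starProjection‖ = ‖(T ∘L V.subtypeL) ∘L V.orthogonalProjectionOnto‖ := rfl
      _ ≤ ‖T ∘L V.subtypeL‖ * ‖V.orthogonalProjectionOnto‖ := ContinuousLinearMap.opNorm_comp_le _ _
      _ ≤ 2 / 5 * 1 := by
        gcongr
        · exact ContinuousLinearMap.opNorm_le_of_unit_norm (by norm_num)
            fun w hw => (hsmall w w.2 hw).le
        · exact V.orthogonalProjectionOnto_norm_le
      _ = 2 / 5 := mul_one _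
  set T' := (5 / 7 : ℝ) • T ∘L (ContinuousLinearMap.id ℝ H + V.starProjection)
  have hT' : ‖T'‖ ≤ 1 :=
    calc ‖T'‖ = 5 / 7 * ‖T + T ∘L V.starProjection‖ := by
          rw [norm_smul, ContinuousLinearMap.comp_add, ContinuousLinearMap.comp_id]; norm_num
      _ ≤ 5 / 7 * (1 + 2 / 5) := by gcongr; exact (norm_add_le _ _).trans (add_le_add hT hTV)
      _ = 1 := by norm_num
  have hdet' : |(J ∘L T').det| = (5 / 7) ^ finrank ℝ H * 2 ^ finrank ℝ V * |(J ∘L T).det| := by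
    have : J ∘L T' =
        (5 / 7 : ℝ) • ((J ∘L T) ∘L (ContinuousLinearMap.id ℝ H + V.starProjection)) := by
      ext x; simp [T']
    rw [this, ContinuousLinearMap.det, ContinuousLinearMap.toLinearMap_smul, LinearMap.det_smul,
      ContinuousLinearMap.toLinearMap_comp, LinearMap.det_comp, ← ContinuousLinearMap.det,
      ← ContinuousLinearMap.det, V.det_id_add_starProjection, abs_mul, abs_mul, abs_pow, abs_pow,
      abs_two, abs_of_pos (by norm_num : (0 : ℝ) < 5 / 7)]
    ring
  have hgrow : 1 < (5 / 7 : ℝ) ^ finrank ℝ H * 2 ^ finrank ℝ V := by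
    have h57 : (5 / 7 : ℝ) ^ finrank ℝ H = ((7 / 5) ^ finrank ℝ H)⁻¹ := by
      rw [← inv_pow]; norm_num
    rwa [h57, inv_mul_eq_div, one_lt_div (by positivity)]
  have hle : |(J ∘L T').det| ≤ |(J ∘L T).det| := hmax (mem_closedBall_zero_iff.2 hT')
  rw [hdet'] at hle
  nlinarith

theorem exists_orthonormal_le_norm_apply [FiniteDimensional ℝ H] (J : F →L[ℝ] H) {T : H →L[ℝ] F}
    (hT : ‖T‖ ≤ 1) (hdet : 0 < |(J ∘L T).det|)
    (hmax : IsMaxOn (fun S : H →L[ℝ] F => |(J ∘L S).det|) (Metric.closedBall 0 1) T)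
    (k : ℕ) (hk : (7 / 5 : ℝ) ^ finrank ℝ H < 2 ^ (finrank ℝ H + 1 - k)) :
    ∃ u : Fin k → H, Orthonormal ℝ u ∧ ∀ i, 2 / 5 ≤ ‖T (u i)‖ := by
  induction k with
  | zero => exact ⟨Fin.elim0, .of_isEmpty _, fun i => i.elim0⟩
  | succ k ih =>
    obtain ⟨u, hu, hTu⟩ := ih (hk.trans_le (pow_le_pow_right₀ one_le_two (by omega)))
    have hV : finrank ℝ (Submodule.span ℝ (Set.range u))ᗮ = finrank ℝ H - k := by
      have := (Submodule.span ℝ (Set.range u)).finrank_add_finrank_orthogonal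
      rw [finrank_span_eq_card hu.linearIndependent, Fintype.card_fin] at this
      omega
    obtain ⟨w, hwV, hw, hTw⟩ := exists_norm_eq_one_le_norm_apply J hT hdet hmax _
      (by rwa [hV, show finrank ℝ H - k = finrank ℝ H + 1 - (k + 1) by omega])
    refine ⟨Matrix.vecCons w u, orthonormal_vecCons_iff.2 ⟨hw, fun i => ?_, hu⟩,
      Fin.cases hTw hTu⟩
    exact Submodule.inner_left_of_mem_orthogonal (Submodule.subset_span (Set.mem_range_self i)) hwV

theorem exists_dvoretzkyRogers_of_finrank [FiniteDimensional ℝ F] {n : ℕ}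
    (hF : finrank ℝ F = 2 * n) :
    ∃ y : Fin n → F, (∀ i, 2 / 5 ≤ ‖y i‖ ∧ ‖y i‖ ≤ 1) ∧
      ∀ f : F →L[ℝ] ℝ, ∑ i, f (y i) ^ 2 ≤ ‖f‖ ^ 2 := by
  let J : F ≃L[ℝ] EuclideanSpace ℝ (Fin (2 * n)) :=
    ContinuousLinearEquiv.ofFinrankEq (by simp [hF])
  obtain ⟨T, hT, hdet, hmax⟩ := exists_isMaxOn_abs_det J
  rw [mem_closedBall_zero_iff] at hT
  have hn : (7 / 5 : ℝ) ^ (2 * n) < 2 ^ (2 * n + 1 - n) :=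
    calc (7 / 5 : ℝ) ^ (2 * n) = (49 / 25) ^ n := by rw [pow_mul]; norm_num
      _ ≤ 2 ^ n := pow_le_pow_left₀ (by norm_num) (by norm_num) n
      _ < 2 ^ (2 * n + 1 - n) := pow_lt_pow_right₀ one_lt_two (by omega)
  obtain ⟨u, hu, hTu⟩ := exists_orthonormal_le_norm_apply (J : F →L[ℝ] _) hT hdet hmax n
    (by simpa using hn)
  refine ⟨fun i => T (u i), fun i => ⟨hTu i, ?_⟩, fun f => ?_⟩
  · simpa [hu.norm_eq_one] using T.le_of_opNorm_le hT (u i)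
  · calc ∑ i, f (T (u i)) ^ 2 ≤ ‖f ∘L T‖ ^ 2 := hu.sum_sq_apply_le (f ∘L T) _
      _ ≤ ‖f‖ ^ 2 := by
        gcongr
        simpa using f.opNorm_comp_le T |>.trans (mul_le_of_le_one_right (norm_nonneg f) hT)

end DvoretzkyRogers

theorem exists_dvoretzkyRogers {E : Type*} [NormedAddCommGroup E] [NormedSpace ℝ E]
    (hE : ¬ FiniteDimensional ℝ E) (n : ℕ) :
    ∃ y : Fin n → E, (∀ i, 2 / 5 ≤ ‖y i‖ ∧ ‖y i‖ ≤ 1) ∧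
      ∀ f : E →L[ℝ] ℝ, ∑ i, f (y i) ^ 2 ≤ ‖f‖ ^ 2 := by
  obtain ⟨v, hv⟩ : ∃ v : Fin (2 * n) → E, LinearIndependent ℝ v :=
    exists_linearIndependent_of_le_rank
      (Cardinal.natCast_lt_aleph0.le.trans (not_lt.1 (Module.rank_lt_aleph0_iff.not.2 hE)))
  set W := Submodule.span ℝ (Set.range v)
  have : FiniteDimensional ℝ W := FiniteDimensional.span_of_finite ℝ (Set.finite_range v)
  obtain ⟨y, hy, hfy⟩ := exists_dvoretzkyRogers_of_finrank (F := W)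
    (by rw [finrank_span_eq_card hv, Fintype.card_fin])
  refine ⟨fun i => y i, hy, fun f => ?_⟩
  calc ∑ i, f (y i) ^ 2 = ∑ i, (f ∘L W.subtypeL) (y i) ^ 2 := rfl
    _ ≤ ‖f ∘L W.subtypeL‖ ^ 2 := hfy _
    _ ≤ ‖f‖ ^ 2 := by
      gcongr
      exact (f.opNorm_comp_le _).trans (mul_le_of_le_one_right (norm_nonneg f) W.norm_subtypeL_le)

section Blocks

variable {E : Type*} [NormedAddCommGroup E] [NormedSpace ℝ E]

theorem sum_abs_apply_rpow_le {ι : Type*} [Fintype ι] {p : ℝ} (hp : 1 ≤ p) {y : ι → E}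
    (hy : ∀ i, ‖y i‖ ≤ 1) (f : E →L[ℝ] ℝ) (hf : ∑ i, f (y i) ^ 2 ≤ ‖f‖ ^ 2) :
    ∑ i, |f (y i)| ^ p ≤ √(Fintype.card ι) * ‖f‖ ^ p := by
  have hpow : ∀ i, |f (y i)| ^ p ≤ ‖f‖ ^ (p - 1) * |f (y i)| := fun i => by
    have hfi : |f (y i)| ≤ ‖f‖ :=
      (f.le_opNorm _).trans (mul_le_of_le_one_right (norm_nonneg f) (hy i))
    calc |f (y i)| ^ p = |f (y i)| ^ (p - 1) * |f (y i)| := by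
          rw [← Real.rpow_add_one' (abs_nonneg _) (by linarith), sub_add_cancel]
      _ ≤ ‖f‖ ^ (p - 1) * |f (y i)| := by gcongr
  have hcs : ∑ i, |f (y i)| ≤ √(Fintype.card ι) * ‖f‖ :=
    calc ∑ i, |f (y i)| = ∑ i, 1 * |f (y i)| := by simp
      _ ≤ √(∑ i : ι, 1 ^ 2) * √(∑ i, |f (y i)| ^ 2) := Real.sum_mul_le_sqrt_mul_sqrt _ _ _
      _ ≤ √(Fintype.card ι) * ‖f‖ := by
        simp only [one_pow, Finset.sum_const, Finset.card_univ, nsmul_eq_mul, mul_one, sq_abs]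
        gcongr
        exact Real.sqrt_le_iff.2 ⟨norm_nonneg f, hf⟩
  calc ∑ i, |f (y i)| ^ p ≤ ∑ i, ‖f‖ ^ (p - 1) * |f (y i)| := Finset.sum_le_sum fun i _ => hpow i
    _ ≤ ‖f‖ ^ (p - 1) * (√(Fintype.card ι) * ‖f‖) := by rw [← Finset.mul_sum]; gcongr
    _ = √(Fintype.card ι) * ‖f‖ ^ p := by
      rw [mul_left_comm, ← Real.rpow_add_one' (norm_nonneg f) (by linarith), sub_add_cancel]

theorem exists_block (hE : ¬ FiniteDimensional ℝ E) {p : ℝ} (hp : 1 ≤ p) (m : ℕ) :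
    ∃ z : Fin (4 ^ m) → E, (2 / 5) ^ p ≤ ∑ i, ‖z i‖ ^ p ∧
      ∀ f : E →L[ℝ] ℝ, ∑ i, |f (z i)| ^ p ≤ ‖f‖ ^ p * (1 / 2) ^ m := by
  obtain ⟨y, hy, hfy⟩ := exists_dvoretzkyRogers hE (4 ^ m)
  set t : ℝ := ((1 / 4) ^ m) ^ p⁻¹
  have ht : 0 ≤ t := by positivity
  have htp : t ^ p = (1 / 4) ^ m := Real.rpow_inv_rpow (by positivity) (by linarith)
  refine ⟨fun i => t • y i, ?_, fun f => ?_⟩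
  · calc (2 / 5) ^ p = ∑ _i : Fin (4 ^ m), t ^ p * (2 / 5) ^ p := by
          rw [Finset.sum_const, Finset.card_univ, Fintype.card_fin, nsmul_eq_mul, htp, ← mul_assoc,
            Nat.cast_pow, ← mul_pow]
          norm_num
      _ ≤ ∑ i, ‖t • y i‖ ^ p := by
          gcongr with i
          rw [norm_smul, Real.norm_of_nonneg ht, Real.mul_rpow ht (norm_nonneg _)]
          gcongr
          exact (hy i).1
  · have hsqrt : √((4 ^ m : ℕ) : ℝ) = 2 ^ m := by
      rw [Nat.cast_pow, Nat.cast_ofNat, show (4 : ℝ) = 2 ^ 2 by norm_num, ← pow_mul, mul_comm,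
        pow_mul, Real.sqrt_sq (by positivity)]
    calc ∑ i, |f (t • y i)| ^ p = t ^ p * ∑ i, |f (y i)| ^ p := by
          simp only [map_smul, smul_eq_mul, abs_mul, abs_of_nonneg ht,
            Real.mul_rpow ht (abs_nonneg _), Finset.mul_sum]
      _ ≤ t ^ p * (√(Fintype.card (Fin (4 ^ m))) * ‖f‖ ^ p) := by
          gcongr
          exact sum_abs_apply_rpow_le hp (fun i => (hy i).2) f (hfy f)
      _ = ‖f‖ ^ p * (1 / 2) ^ m := by
          rw [Fintype.card_fin, hsqrt, htp, ← mul_assoc, ← mul_pow, mul_comm]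
          norm_num

end Blocks

section WeakNorm

variable {E : Type*} [NormedAddCommGroup E] [NormedSpace ℝ E]

theorem wNorm_nonneg (p : ℝ) (x : ℕ → E) : 0 ≤ wNorm p x :=
  Real.iSup_nonneg fun _ => by positivity

theorem wNorm_le {p B : ℝ} {x : ℕ → E} (hp : 0 < p) (hB : 0 ≤ B)
    (h : ∀ f : E →L[ℝ] ℝ, ‖f‖ ≤ 1 → ∑' j, |f (x j)| ^ p ≤ B) : wNorm p x ≤ B ^ (1 / p) :=
  Real.iSup_le (fun f => Real.rpow_le_rpow (tsum_nonneg fun _ => by positivity) (h f.1 f.2)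
    (by positivity)) (by positivity)

end WeakNorm

def blockTrunc {E : Type*} [Zero E] {N : ℕ → ℕ} (n : ℕ) (X : (Σ m, Fin (N m)) → E) :
    (Σ m, Fin (N m)) → E :=
  fun w => if w.1 < n then X w else 0

section BlockSequence

variable {N : ℕ → ℕ}

theorem summable_sigma_fin_iff {g : (Σ m, Fin (N m)) → ℝ} (hg : ∀ w, 0 ≤ g w) :
    Summable g ↔ Summable fun m => ∑ i, g ⟨m, i⟩ := by
  simp only [summable_sigma_of_nonneg hg, tsum_fintype]
  exact ⟨And.right, fun h => ⟨fun _ => .of_finite, h⟩⟩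

theorem summable_of_eq_zero_of_le_fst {g : (Σ m, Fin (N m)) → ℝ} (n : ℕ)
    (hg : ∀ w, n ≤ w.1 → g w = 0) : Summable g :=
  summable_of_ne_finset_zero (s := (Finset.range n).sigma fun _ => Finset.univ) fun w hw => by
    simp only [Finset.mem_sigma, Finset.mem_range, Finset.mem_univ, and_true, not_lt] at hw
    exact hg w hw

theorem not_summable_of_le_sum {g : (Σ m, Fin (N m)) → ℝ} (hg : ∀ w, 0 ≤ g w) {c : ℝ}
    (hc : 0 < c) (hrow : ∀ m, c ≤ ∑ i, g ⟨m, i⟩) : ¬ Summable g := fun h => by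
  obtain ⟨m, hm⟩ := (((summable_sigma_fin_iff hg).1 h).tendsto_atTop_zero.eventually
    (gt_mem_nhds hc)).exists
  exact (hrow m).not_gt hm

variable {E : Type*} [NormedAddCommGroup E] {X : (Σ m, Fin (N m)) → E} {p : ℝ}
  (e : ℕ ≃ Σ m, Fin (N m))

theorem not_memLpSeq_comp_equiv {c : ℝ} (hc : 0 < c) (hstrong : ∀ m, c ≤ ∑ i, ‖X ⟨m, i⟩‖ ^ p) :
    ¬ MemLpSeq p (X ∘ e) := fun h =>
  not_summable_of_le_sum (g := fun w => ‖X w‖ ^ p) (fun _ => by positivity) hc hstrong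
    (e.summable_iff.1 h)

theorem memLpSeq_blockTrunc_comp_equiv (hp : 0 < p) (n : ℕ) :
    MemLpSeq p (blockTrunc n X ∘ e) :=
  (e.summable_iff (f := fun w => ‖blockTrunc n X w‖ ^ p)).2 <|
    summable_of_eq_zero_of_le_fst n fun w hw => by
      simp [blockTrunc, hw.not_gt, Real.zero_rpow hp.ne']

variable [NormedSpace ℝ E]

theorem wSummable_blockTrunc_comp_equiv (hp : 0 < p) (n : ℕ) :
    WSummable p (blockTrunc n X ∘ e) := fun f =>
  (e.summable_iff (f := fun w => |f (blockTrunc n X w)| ^ p)).2 <|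
    summable_of_eq_zero_of_le_fst n fun w hw => by
      simp [blockTrunc, hw.not_gt, Real.zero_rpow hp.ne']

theorem summable_abs_apply_rpow
    (hweak : ∀ m (f : E →L[ℝ] ℝ), ∑ i, |f (X ⟨m, i⟩)| ^ p ≤ ‖f‖ ^ p * (1 / 2) ^ m)
    (f : E →L[ℝ] ℝ) : Summable fun w => |f (X w)| ^ p :=
  (summable_sigma_fin_iff fun _ => by positivity).2 <|
    .of_nonneg_of_le (fun _ => by positivity) (fun m => hweak m f)
      (summable_geometric_two.mul_left _)

theorem wSummable_comp_equiv
    (hweak : ∀ m (f : E →L[ℝ] ℝ), ∑ i, |f (X ⟨m, i⟩)| ^ p ≤ ‖f‖ ^ p * (1 / 2) ^ m) :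
    WSummable p (X ∘ e) := fun f =>
  (e.summable_iff (f := fun w => |f (X w)| ^ p)).2 (summable_abs_apply_rpow hweak f)

theorem tsum_abs_apply_rpow_blockTrunc_sub_le (hp : 0 < p)
    (hweak : ∀ m (f : E →L[ℝ] ℝ), ∑ i, |f (X ⟨m, i⟩)| ^ p ≤ ‖f‖ ^ p * (1 / 2) ^ m)
    (f : E →L[ℝ] ℝ) (n : ℕ) :
    ∑' w, |f (blockTrunc n X w - X w)| ^ p ≤ ‖f‖ ^ p * (2 * (1 / 2) ^ n) := by
  set g : (Σ m, Fin (N m)) → ℝ := fun w => |f (blockTrunc n X w - X w)| ^ p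
  have hg0 : ∀ w, 0 ≤ g w := fun w => by positivity
  have hg : ∀ w, g w = if w.1 < n then 0 else |f (X w)| ^ p := fun w => by
    split_ifs with h <;> simp [g, blockTrunc, h, Real.zero_rpow hp.ne']
  have hrow : ∀ m, ∑ i, g ⟨m, i⟩ = if m < n then 0 else ∑ i, |f (X ⟨m, i⟩)| ^ p := fun m => by
    split_ifs with h <;> simp [hg, h]
  have hsum : Summable fun m => ∑ i, g ⟨m, i⟩ :=
    (summable_sigma_fin_iff hg0).1 <| .of_nonneg_of_le hg0
      (fun w => by rw [hg]; split_ifs; exacts [by positivity, le_rfl])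
      (summable_abs_apply_rpow hweak f)
  rw [((summable_sigma_fin_iff hg0).2 hsum).tsum_sigma]
  simp_rw [tsum_fintype]
  rw [← hsum.sum_add_tsum_nat_add n,
    Finset.sum_eq_zero fun m hm => by simp [hrow, Finset.mem_range.1 hm], zero_add]
  calc ∑' k, ∑ i, g ⟨k + n, i⟩ ≤ ∑' k, ‖f‖ ^ p * (1 / 2) ^ n * (1 / 2) ^ k := by
        refine Summable.tsum_le_tsum (fun k => ?_) (hsum.comp_injective (add_left_injective n))
          (summable_geometric_two.mul_left _)
        rw [hrow, if_neg (by omega), mul_assoc, ← pow_add, add_comm n]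
        exact hweak (k + n) f
    _ = ‖f‖ ^ p * (2 * (1 / 2) ^ n) := by rw [tsum_mul_left, tsum_geometric_two]; ring

theorem tendsto_wNorm_blockTrunc_sub (hp : 0 < p)
    (hweak : ∀ m (f : E →L[ℝ] ℝ), ∑ i, |f (X ⟨m, i⟩)| ^ p ≤ ‖f‖ ^ p * (1 / 2) ^ m) :
    Tendsto (fun n => wNorm p fun j => blockTrunc n X (e j) - X (e j)) atTop (nhds 0) := by
  refine squeeze_zero (g := fun n => (2 * (1 / 2) ^ n) ^ (1 / p)) (fun n => wNorm_nonneg _ _)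
    (fun n => wNorm_le hp (by positivity) fun f hf => ?_) ?_
  · calc ∑' j, |f (blockTrunc n X (e j) - X (e j))| ^ p
          = ∑' w, |f (blockTrunc n X w - X w)| ^ p :=
          e.tsum_eq fun w => |f (blockTrunc n X w - X w)| ^ p
      _ ≤ ‖f‖ ^ p * (2 * (1 / 2) ^ n) := tsum_abs_apply_rpow_blockTrunc_sub_le hp hweak f n
      _ ≤ 2 * (1 / 2) ^ n :=
          mul_le_of_le_one_left (by positivity) (Real.rpow_le_one (norm_nonneg f) hf hp.le)
  · have := ((tendsto_pow_atTop_nhds_zero_of_lt_one (by norm_num : (0 : ℝ) ≤ 1 / 2)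
      (by norm_num)).const_mul 2).rpow_const (p := 1 / p) (Or.inr (by positivity))
    rwa [mul_zero, Real.zero_rpow (by positivity)] at this

end BlockSequence

theorem stmt_1_general {E : Type*} [NormedAddCommGroup E] [NormedSpace ℝ E]
    (hE : ¬ FiniteDimensional ℝ E) (p : ℝ) (hp : 1 ≤ p) :
    ∃ x : ℕ → E, WSummable p x ∧ ¬ MemLpSeq p x ∧
      ∃ u : ℕ → ℕ → E, (∀ n, MemLpSeq p (u n)) ∧ (∀ n, WSummable p (u n)) ∧
        Tendsto (fun n => wNorm p fun j => u n j - x j) atTop (nhds 0) := by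
  have hp₀ : 0 < p := by linarith
  choose z hz_strong hz_weak using exists_block hE hp
  let X : (Σ m, Fin (4 ^ m)) → E := fun w => z w.1 w.2
  have : Infinite (Σ m, Fin (4 ^ m)) :=
    .of_injective (fun m => ⟨m, 0, by positivity⟩) fun _ _ h => congrArg Sigma.fst h
  obtain ⟨e⟩ : Nonempty (ℕ ≃ Σ m, Fin (4 ^ m)) :=
    ⟨(Denumerable.ofEncodableOfInfinite _).eqv.symm⟩
  exact ⟨X ∘ e, wSummable_comp_equiv e hz_weak,
    not_memLpSeq_comp_equiv e (by positivity) hz_strong,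
    fun n => blockTrunc n X ∘ e, memLpSeq_blockTrunc_comp_equiv e hp₀,
    wSummable_blockTrunc_comp_equiv e hp₀, tendsto_wNorm_blockTrunc_sub e hp₀ hz_weak⟩

/-- if `E` is infinite dimensional then `ℓ_p(E)` is not closed in `ℓ_p^w(E)`
with respect to the weak `ℓ_p` norm: there is a weakly `p`-summable sequence which is not
absolutely `p`-summable but is the weak-norm limit of absolutely `p`-summable sequences. -/
theorem stmt_1 {E : Type*} [NormedAddCommGroup E] [NormedSpace ℝ E] [CompleteSpace E]
    (hE : ¬ FiniteDimensional ℝ E) (p : ℝ) (hp : 1 ≤ p) :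
    ∃ x : ℕ → E, WSummable p x ∧ ¬ MemLpSeq p x ∧
      ∃ u : ℕ → ℕ → E, (∀ n, MemLpSeq p (u n)) ∧ (∀ n, WSummable p (u n)) ∧
        Tendsto (fun n => wNorm p fun j => u n j - x j) atTop (nhds 0) :=
  stmt_1_general hE p hp
end
end

section
/- For every sequence x = (x_j) in ℓ_p^mid(E), the supremum ‖x‖_{mid,p} := sup over (x_n*) in the unit ball of ℓ_p^w(E*) of (Σ_n Σ_j |x_n*(x_j)|^p)^{1/p} is finite. -/
open Filter

noncomputable section

/-
Gliding hump. Weak `p`-summability of `y` makes `f ↦ (f (y j))_j` a linear map from the dual into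
`ℓ_p` with closed graph, hence bounded, and its norm is `wNorm p y`; so every `y` in the unit ball
of `ℓ_p^w` satisfies `Σ_j |f (y j)|^p ≤ ‖f‖^p`. If the double sums over that unit ball were
unbounded, pick `u_k` in it with double sum `> k 2^k` and enumerate the weighted family
`2^{-k/p} u_k` as one sequence `y`. It is still weakly `p`-summable, so mid-summability of `x`
makes the double sum of `y` finite, yet for every `k` it is at least `2^{-k}` times that of `u_k`,
which exceeds `k`.
-/
namespace WSummable

variable {F : Type*} [NormedAddCommGroup F] [NormedSpace ℝ F] {p : ℝ}
  [Fact (1 ≤ ENNReal.ofReal p)] {y : ℕ → F}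

lemma one_le_exponent : 1 ≤ p := ENNReal.one_le_ofReal.mp Fact.out

lemma toReal_ofReal_exponent : (ENNReal.ofReal p).toReal = p :=
  ENNReal.toReal_ofReal (zero_le_one.trans one_le_exponent)

def coeffMap (hy : WSummable p y) :
    (F →L[ℝ] ℝ) →ₗ[ℝ] lp (fun _ : ℕ => ℝ) (ENNReal.ofReal p) where
  toFun f := ⟨fun j => f (y j), memℓp_gen <| by simpa [toReal_ofReal_exponent] using hy f⟩
  map_add' _ _ := rfl
  map_smul' _ _ := rfl

lemma coeffMap_apply (hy : WSummable p y) (f : F →L[ℝ] ℝ) (j : ℕ) :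
    hy.coeffMap f j = f (y j) :=
  rfl

lemma norm_coeffMap_rpow (hy : WSummable p y) (f : F →L[ℝ] ℝ) :
    ‖hy.coeffMap f‖ ^ p = ∑' j, |f (y j)| ^ p := by
  have hp0 : 0 < (ENNReal.ofReal p).toReal := by
    rw [toReal_ofReal_exponent]; exact zero_lt_one.trans_le one_le_exponent
  simpa [toReal_ofReal_exponent, coeffMap_apply] using lp.norm_rpow_eq_tsum hp0 (hy.coeffMap f)

def coeffCLM (hy : WSummable p y) :
    (F →L[ℝ] ℝ) →L[ℝ] lp (fun _ : ℕ => ℝ) (ENNReal.ofReal p) :=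
  ContinuousLinearMap.ofSeqClosedGraph (g := hy.coeffMap) fun _ f a hu ha =>
    lp.ext <| funext fun j =>
      tendsto_nhds_unique (((lp.evalCLM ℝ _ _ j).continuous.tendsto a).comp ha)
        (((ContinuousLinearMap.apply ℝ ℝ (y j)).continuous.tendsto f).comp hu)

lemma wNorm_eq_norm_coeffCLM (hy : WSummable p y) : wNorm p y = ‖hy.coeffCLM‖ := by
  have hterm (f : F →L[ℝ] ℝ) : (∑' j, |f (y j)| ^ p) ^ (1 / p) = ‖hy.coeffCLM f‖ := by
    rw [← norm_coeffMap_rpow hy f, ← Real.rpow_mul (norm_nonneg _),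
      mul_one_div_cancel (zero_lt_one.trans_le one_le_exponent).ne', Real.rpow_one]
    rfl
  rw [← hy.coeffCLM.sSup_unitClosedBall_eq_norm, wNorm, iSup]
  congr 1
  ext r
  simp only [Set.mem_range, Set.mem_image, Subtype.exists, mem_closedBall_zero_iff, hterm,
    exists_prop]

lemma tsum_rpow_le_of_wNorm_le_one (hy : WSummable p y) (h1 : wNorm p y ≤ 1) (f : F →L[ℝ] ℝ) :
    ∑' j, |f (y j)| ^ p ≤ ‖f‖ ^ p := by
  rw [← norm_coeffMap_rpow hy f]
  have hTf : ‖hy.coeffCLM f‖ ≤ ‖f‖ := by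
    rw [wNorm_eq_norm_coeffCLM hy] at h1
    simpa using hy.coeffCLM.le_of_opNorm_le h1 f
  exact Real.rpow_le_rpow (norm_nonneg _) hTf (zero_le_one.trans one_le_exponent)

end WSummable

section WeightedConcat

variable {p : ℝ}

lemma abs_mul_rpow (a b : ℝ) : |a * b| ^ p = |a| ^ p * |b| ^ p := by
  rw [abs_mul, Real.mul_rpow (abs_nonneg a) (abs_nonneg b)]

def weightedConcat {F : Type*} [SMul ℝ F] (c : ℕ → ℝ) (u : ℕ → ℕ → F) (m : ℕ) : F :=
  c (Nat.unpair m).1 • u (Nat.unpair m).1 (Nat.unpair m).2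

lemma weightedConcat_pair {F : Type*} [SMul ℝ F] (c : ℕ → ℝ) (u : ℕ → ℕ → F) (k n : ℕ) :
    weightedConcat c u (Nat.pair k n) = c k • u k n := by
  simp [weightedConcat]

variable {F : Type*} [NormedAddCommGroup F] [NormedSpace ℝ F]

lemma wSummable_weightedConcat {c : ℕ → ℝ} (hc : Summable fun k => |c k| ^ p) {u : ℕ → ℕ → F}
    (hu : ∀ k, WSummable p (u k))
    (hbound : ∀ k (f : F →L[ℝ] ℝ), ∑' n, |f (u k n)| ^ p ≤ ‖f‖ ^ p) :
    WSummable p (weightedConcat c u) := by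
  intro f
  have hterm (kn : ℕ × ℕ) :
      |f (c kn.1 • u kn.1 kn.2)| ^ p = |c kn.1| ^ p * |f (u kn.1 kn.2)| ^ p := by
    rw [map_smul, smul_eq_mul, abs_mul_rpow]
  have hprod : Summable fun kn : ℕ × ℕ => |c kn.1| ^ p * |f (u kn.1 kn.2)| ^ p := by
    refine (summable_prod_of_nonneg (Pi.le_def.2 fun _ => by positivity)).2
      ⟨fun k => (hu k f).mul_left (|c k| ^ p), ?_⟩
    refine (hc.mul_right (‖f‖ ^ p)).of_nonneg_of_le (fun _ => by positivity) fun k => ?_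
    dsimp only
    rw [tsum_mul_left]
    exact mul_le_mul_of_nonneg_left (hbound k f) (by positivity)
  exact (Nat.pairEquiv.symm.summable_iff.2 hprod).congr fun m => (hterm (Nat.unpair m)).symm

lemma rpow_mul_tsum_le_tsum_weightedConcat {E : Type*} [NormedAddCommGroup E] [NormedSpace ℝ E]
    (x : ℕ → E) (c : ℕ → ℝ) (u : ℕ → ℕ → E →L[ℝ] ℝ) (k : ℕ)
    (hu : Summable fun nj : ℕ × ℕ => |u k nj.1 (x nj.2)| ^ p)
    (hconcat : Summable fun nj : ℕ × ℕ => |weightedConcat c u nj.1 (x nj.2)| ^ p) :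
    |c k| ^ p * ∑' nj : ℕ × ℕ, |u k nj.1 (x nj.2)| ^ p ≤
      ∑' nj : ℕ × ℕ, |weightedConcat c u nj.1 (x nj.2)| ^ p := by
  rw [← tsum_mul_left]
  refine (hu.mul_left _).tsum_le_tsum_of_inj (fun nj => (Nat.pair k nj.1, nj.2)) ?_
    (fun _ _ => by positivity) (fun nj => ?_) hconcat
  · intro a b hab
    simp only [Prod.mk.injEq] at hab
    exact Prod.ext (Nat.pair_eq_pair.mp hab.1).2 hab.2
  · rw [weightedConcat_pair, smul_apply, smul_eq_mul, abs_mul_rpow]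

end WeightedConcat

theorem MidSummable.bddAbove_tsum {E : Type*} [NormedAddCommGroup E] [NormedSpace ℝ E] {p : ℝ}
    (hp : 1 ≤ p) {x : ℕ → E} (hx : MidSummable p x) :
    BddAbove (Set.range fun xs : {xs : ℕ → E →L[ℝ] ℝ // WSummable p xs ∧ wNorm p xs ≤ 1} =>
      ∑' nj : ℕ × ℕ, |xs.1 nj.1 (x nj.2)| ^ p) := by
  have : Fact (1 ≤ ENNReal.ofReal p) := ⟨ENNReal.one_le_ofReal.mpr hp⟩
  by_contra hB
  have hlarge (k : ℕ) : ∃ xs : {xs : ℕ → E →L[ℝ] ℝ // WSummable p xs ∧ wNorm p xs ≤ 1},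
      (k : ℝ) * 2 ^ k < ∑' nj : ℕ × ℕ, |xs.1 nj.1 (x nj.2)| ^ p := by
    obtain ⟨_, ⟨xs, rfl⟩, h⟩ := not_bddAbove_iff.1 hB ((k : ℝ) * 2 ^ k)
    exact ⟨xs, h⟩
  choose u hu using hlarge
  set c : ℕ → ℝ := fun k => ((2 ^ k)⁻¹) ^ p⁻¹
  have hc (k : ℕ) : |c k| ^ p = (2 ^ k)⁻¹ := by
    rw [abs_of_nonneg (by positivity), Real.rpow_inv_rpow (by positivity) (by positivity)]
  set y := weightedConcat c fun k => (u k).1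
  have hy : WSummable p y :=
    wSummable_weightedConcat (by simpa [hc] using summable_geometric_two) (fun k => (u k).2.1)
      fun k => (u k).2.1.tsum_rpow_le_of_wNorm_le_one (u k).2.2
  obtain ⟨K, hK⟩ := exists_nat_gt (∑' nj : ℕ × ℕ, |y nj.1 (x nj.2)| ^ p)
  have hblock :=
    rpow_mul_tsum_le_tsum_weightedConcat x c (fun k => (u k).1) K (hx.2 _ (u K).2.1) (hx.2 _ hy)
  have hKlt : (K : ℝ) < (2 ^ K)⁻¹ * ∑' nj : ℕ × ℕ, |(u K).1 nj.1 (x nj.2)| ^ p := by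
    rw [inv_mul_eq_div, lt_div_iff₀ (by positivity)]
    exact hu K
  rw [hc] at hblock
  linarith

theorem stmt_4_general {E : Type*} [NormedAddCommGroup E] [NormedSpace ℝ E]
    (p : ℝ) (hp : 1 ≤ p) (x : ℕ → E) (hx : MidSummable p x) :
    BddAbove (Set.range fun xs : {xs : ℕ → E →L[ℝ] ℝ // WSummable p xs ∧ wNorm p xs ≤ 1} =>
      (∑' nj : ℕ × ℕ, |xs.1 nj.1 (x nj.2)| ^ p) ^ (1 / p)) := by
  obtain ⟨B, hB⟩ := hx.bddAbove_tsum hp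
  refine ⟨B ^ (1 / p), ?_⟩
  rintro _ ⟨xs, rfl⟩
  exact Real.rpow_le_rpow (tsum_nonneg fun _ => by positivity) (hB ⟨xs, rfl⟩) (by positivity)

/-- for every mid `p`-summable sequence `x`, the supremum defining
`‖x‖_{mid,p}` is finite, i.e. the set of double sums over the unit ball of
`ℓ_p^w(E*)` is bounded above. -/
theorem stmt_4 {E : Type*} [NormedAddCommGroup E] [NormedSpace ℝ E] [CompleteSpace E]
    (p : ℝ) (hp : 1 ≤ p) (x : ℕ → E) (hx : MidSummable p x) :
    BddAbove (Set.range fun xs : {xs : ℕ → E →L[ℝ] ℝ // WSummable p xs ∧ wNorm p xs ≤ 1} =>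
      (∑' nj : ℕ × ℕ, |xs.1 nj.1 (x nj.2)| ^ p) ^ (1 / p)) :=
  stmt_4_general p hp x hx
end
end

section
/- If E is a strong mid p-space (i.e., ℓ_p^mid(E) = ℓ_p(E)), then ℓ_p^mid(E) is contractively contained in ℓ_p^u(E): every mid p-summable sequence is unconditionally p-summable and ‖·‖_{w,p} ≤ ‖·‖_{mid,p}. -/
open Filter

noncomputable section

section AuxBS

variable {F : Type*} [NormedAddCommGroup F] [NormedSpace ℝ F]


variable {F : Type*} [NormedAddCommGroup F] [NormedSpace ℝ F]

lemma aux_memℓp {p : ℝ} (hp : 0 < p) (N : ℕ) (v : ℕ → ℝ) :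
    Memℓp (fun i => if i < N then v i else 0) (ENNReal.ofReal p) := by
  have htr : (ENNReal.ofReal p).toReal = p := ENNReal.toReal_ofReal hp.le
  apply memℓp_gen
  apply summable_of_ne_finset_zero (s := Finset.range N)
  intro b hb
  simp only [Finset.mem_range, not_lt] at hb
  rw [if_neg (by omega), htr]
  simp [Real.zero_rpow hp.ne']

def truncMap {p : ℝ} (hp : 0 < p) (xs : ℕ → F) (N : ℕ) :
    (F →L[ℝ] ℝ) →ₗ[ℝ] lp (fun _ : ℕ => ℝ) (ENNReal.ofReal p) where
  toFun f := ⟨fun i => if i < N then f (xs i) else 0, aux_memℓp hp N _⟩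
  map_add' f g := by
    apply lp.ext
    rw [lp.coeFn_add]
    funext i
    by_cases h : i < N <;> simp [h]
  map_smul' c f := by
    apply lp.ext
    rw [lp.coeFn_smul]
    funext i
    by_cases h : i < N <;> simp [h]

/-- Uniform bound on the weak sums, via Banach–Steinhaus. -/
lemma aux_sum_bound {p : ℝ} (hp : 1 ≤ p) {xs : ℕ → F} (hxs : WSummable p xs) :
    ∃ C : ℝ, 0 ≤ C ∧ ∀ f : F →L[ℝ] ℝ, ‖f‖ ≤ 1 → (∑' n, |f (xs n)| ^ p) ≤ C := by
  have hp0 : (0:ℝ) < p := lt_of_lt_of_le one_pos hp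
  have htr : (ENNReal.ofReal p).toReal = p := ENNReal.toReal_ofReal hp0.le
  haveI : Fact (1 ≤ ENNReal.ofReal p) := ⟨by rwa [ENNReal.one_le_ofReal]⟩
  -- make continuous linear maps
  have hnn : ∀ (f : F →L[ℝ] ℝ) (n : ℕ), (0:ℝ) ≤ |f (xs n)| ^ p :=
    fun f n => Real.rpow_nonneg (abs_nonneg _) _
  have key : ∀ (N : ℕ) (f : F →L[ℝ] ℝ),
      ‖truncMap hp0 xs N f‖ = (∑ i ∈ Finset.range N, |f (xs i)| ^ p) ^ (1/p) := by
    intro N f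
    rw [lp.norm_eq_tsum_rpow (by rw [htr]; exact hp0), htr]
    congr 1
    rw [tsum_eq_sum (s := Finset.range N) (by
      intro b hb
      simp only [Finset.mem_range, not_lt] at hb
      show ‖(if b < N then f (xs b) else 0 : ℝ)‖ ^ _ = 0
      rw [if_neg (by omega)]
      simp [Real.zero_rpow hp0.ne'])]
    apply Finset.sum_congr rfl
    intro i hi
    simp only [Finset.mem_range] at hi
    show ‖(if i < N then f (xs i) else 0 : ℝ)‖ ^ _ = _
    rw [if_pos hi, Real.norm_eq_abs]
  have hcont : ∀ N : ℕ, ∃ M : ℝ, ∀ f : F →L[ℝ] ℝ, ‖truncMap hp0 xs N f‖ ≤ M * ‖f‖ := by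
    intro N
    refine ⟨(∑ i ∈ Finset.range N, ‖xs i‖ ^ p) ^ (1/p), fun f => ?_⟩
    rw [key]
    have h1 : (∑ i ∈ Finset.range N, |f (xs i)| ^ p)
        ≤ ∑ i ∈ Finset.range N, ‖f‖ ^ p * ‖xs i‖ ^ p := by
      apply Finset.sum_le_sum
      intro i _
      rw [← Real.mul_rpow (norm_nonneg _) (norm_nonneg _)]
      exact Real.rpow_le_rpow (abs_nonneg _) (f.le_opNorm (xs i)) hp0.le
    rw [← Finset.mul_sum] at h1
    calc (∑ i ∈ Finset.range N, |f (xs i)| ^ p) ^ (1/p)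
        ≤ (‖f‖ ^ p * ∑ i ∈ Finset.range N, ‖xs i‖ ^ p) ^ (1/p) := by
          apply Real.rpow_le_rpow (Finset.sum_nonneg fun i _ => hnn f i) h1
          positivity
      _ = (∑ i ∈ Finset.range N, ‖xs i‖ ^ p) ^ (1/p) * ‖f‖ := by
          rw [Real.mul_rpow (by positivity) (Finset.sum_nonneg fun i _ =>
            Real.rpow_nonneg (norm_nonneg _) _)]
          rw [← Real.rpow_mul (norm_nonneg f), mul_one_div, div_self hp0.ne',
            Real.rpow_one, mul_comm]
  set g : ℕ → (F →L[ℝ] ℝ) →L[ℝ] lp (fun _ : ℕ => ℝ) (ENNReal.ofReal p) :=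
    fun N => LinearMap.mkContinuousOfExistsBound (truncMap hp0 xs N)
      (by obtain ⟨M, hM⟩ := hcont N; exact ⟨M, hM⟩) with hg
  have hgkey : ∀ (N : ℕ) (f : F →L[ℝ] ℝ),
      ‖g N f‖ = (∑ i ∈ Finset.range N, |f (xs i)| ^ p) ^ (1/p) := fun N f => key N f
  have hpt : ∀ f : F →L[ℝ] ℝ, ∃ C, ∀ N : ℕ, ‖g N f‖ ≤ C := by
    intro f
    refine ⟨(∑' n, |f (xs n)| ^ p) ^ (1/p), fun N => ?_⟩
    rw [hgkey]
    apply Real.rpow_le_rpow (Finset.sum_nonneg fun i _ => hnn f i)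
      (Summable.sum_le_tsum (Finset.range N) (fun i _ => hnn f i) (hxs f)) (by positivity)
  obtain ⟨C', hC'⟩ := banach_steinhaus fun f => hpt f
  refine ⟨(max C' 0) ^ p, Real.rpow_nonneg (le_max_right _ _) _, fun f hf => ?_⟩
  apply Real.tsum_le_of_sum_range_le (hnn f)
  intro N
  have h1 : ‖g N f‖ ≤ max C' 0 := by
    calc ‖g N f‖ ≤ ‖g N‖ * ‖f‖ := (g N).le_opNorm f
      _ ≤ C' * 1 := mul_le_mul (hC' N) hf (norm_nonneg _)
          (le_trans (norm_nonneg _) (hC' N))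
      _ ≤ max C' 0 := by rw [mul_one]; exact le_max_left _ _
  rw [hgkey] at h1
  have hS : (0:ℝ) ≤ ∑ i ∈ Finset.range N, |f (xs i)| ^ p :=
    Finset.sum_nonneg fun i _ => hnn f i
  have h2 := Real.rpow_le_rpow (Real.rpow_nonneg hS _) h1 hp0.le
  rwa [← Real.rpow_mul hS, one_div_mul_cancel hp0.ne', Real.rpow_one] at h2


lemma wNorm_bddAbove {p : ℝ} (hp : 1 ≤ p) {xs : ℕ → F} (hxs : WSummable p xs) :
    BddAbove (Set.range fun f : {f : F →L[ℝ] ℝ // ‖f‖ ≤ 1} =>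
      (∑' n, |f.1 (xs n)| ^ p) ^ (1 / p)) := by
  obtain ⟨C, hC0, hC⟩ := aux_sum_bound hp hxs
  refine ⟨C ^ (1 / p), ?_⟩
  rintro _ ⟨f, rfl⟩
  exact Real.rpow_le_rpow (tsum_nonneg fun n => Real.rpow_nonneg (abs_nonneg _) _)
    (hC f.1 f.2) (by positivity)

lemma le_wNorm {p : ℝ} (hp : 1 ≤ p) {xs : ℕ → F} (hxs : WSummable p xs)
    (f : F →L[ℝ] ℝ) (hf : ‖f‖ ≤ 1) :
    (∑' n, |f (xs n)| ^ p) ^ (1 / p) ≤ wNorm p xs :=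
  le_ciSup (wNorm_bddAbove hp hxs) (⟨f, hf⟩ : {f : F →L[ℝ] ℝ // ‖f‖ ≤ 1})

lemma tsum_le_one_of_wNorm_le_one {p : ℝ} (hp : 1 ≤ p) {xs : ℕ → F}
    (hxs : WSummable p xs) (hw : wNorm p xs ≤ 1)
    (f : F →L[ℝ] ℝ) (hf : ‖f‖ ≤ 1) : (∑' n, |f (xs n)| ^ p) ≤ 1 := by
  have hp0 : (0:ℝ) < p := lt_of_lt_of_le one_pos hp
  have h1 : (∑' n, |f (xs n)| ^ p) ^ (1 / p) ≤ 1 := (le_wNorm hp hxs f hf).trans hw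
  have hS : (0:ℝ) ≤ ∑' n, |f (xs n)| ^ p :=
    tsum_nonneg fun n => Real.rpow_nonneg (abs_nonneg _) _
  have h2 := Real.rpow_le_rpow (Real.rpow_nonneg hS _) h1 hp0.le
  rwa [← Real.rpow_mul hS, one_div_mul_cancel hp0.ne', Real.rpow_one, Real.one_rpow] at h2

end AuxBS
/-- if `E` is a strong mid `p`-space (`ℓ_p^{mid}(E) = ℓ_p(E)`), then
`ℓ_p^{mid}(E)` is contractively contained in `ℓ_p^u(E)`: every mid `p`-summable sequence
is unconditionally `p`-summable and `‖·‖_{w,p} ≤ ‖·‖_{mid,p}`. -/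
theorem stmt_10 {E : Type*} [NormedAddCommGroup E] [NormedSpace ℝ E] [CompleteSpace E]
    (p : ℝ) (hp : 1 ≤ p)
    (hstrong : ∀ x : ℕ → E, MidSummable p x ↔ MemLpSeq p x) :
    ∀ x : ℕ → E, MidSummable p x → USummable p x ∧ wNorm p x ≤ midNorm p x := by
  have hp0 : (0:ℝ) < p := lt_of_lt_of_le one_pos hp
  haveI hne : Nonempty {f : E →L[ℝ] ℝ // ‖f‖ ≤ 1} := ⟨⟨0, by simp⟩⟩
  haveI hne' : Nonempty {g : (E →L[ℝ] ℝ) →L[ℝ] ℝ // ‖g‖ ≤ 1} :=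
    ⟨⟨0, ContinuousLinearMap.opNorm_zero.le.trans zero_le_one⟩⟩
  intro x hx
  obtain ⟨hw, hmid⟩ := id hx
  have hlp : Summable fun j => ‖x j‖ ^ p := (hstrong x).mp hx
  constructor
  · -- USummable
    refine ⟨hw, ?_⟩
    have h1 : ∀ k, 0 ≤ wNorm p fun j => x (j + k) := fun k =>
      Real.iSup_nonneg fun f => Real.rpow_nonneg
        (tsum_nonneg fun n => Real.rpow_nonneg (abs_nonneg _) _) _
    have h2 : ∀ k, (wNorm p fun j => x (j + k)) ≤ (∑' j, ‖x (j + k)‖ ^ p) ^ (1 / p) := by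
      intro k
      apply ciSup_le
      intro f
      apply Real.rpow_le_rpow (tsum_nonneg fun n => Real.rpow_nonneg (abs_nonneg _) _)
        ?_ (by positivity)
      apply Summable.tsum_le_tsum ?_
        ((summable_nat_add_iff (f := fun j => |f.1 (x j)| ^ p) k).2 (hw f.1))
        ((summable_nat_add_iff (f := fun j => ‖x j‖ ^ p) k).2 hlp)
      intro j
      apply Real.rpow_le_rpow (abs_nonneg _) ?_ hp0.le
      calc |f.1 (x (j + k))| ≤ ‖f.1‖ * ‖x (j + k)‖ := f.1.le_opNorm _
        _ ≤ 1 * ‖x (j + k)‖ := by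
            apply mul_le_mul_of_nonneg_right f.2 (norm_nonneg _)
        _ = ‖x (j + k)‖ := one_mul _
    have h3 : Tendsto (fun k => (∑' j, ‖x (j + k)‖ ^ p) ^ (1 / p)) atTop (nhds 0) := by
      have h4 := (tendsto_sum_nat_add fun j => ‖x j‖ ^ p).rpow_const (p := 1 / p)
        (Or.inr (by positivity))
      rwa [Real.zero_rpow (by positivity : (1:ℝ)/p ≠ 0)] at h4
    exact squeeze_zero h1 h2 h3
  · -- wNorm ≤ midNorm
    have hbdd : BddAbove (Set.range fun xs :
        {xs : ℕ → E →L[ℝ] ℝ // WSummable p xs ∧ wNorm p xs ≤ 1} =>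
        (∑' nj : ℕ × ℕ, |xs.1 nj.1 (x nj.2)| ^ p) ^ (1 / p)) := by
      refine ⟨(∑' j, ‖x j‖ ^ p) ^ (1 / p), ?_⟩
      rintro _ ⟨xs, rfl⟩
      apply Real.rpow_le_rpow (tsum_nonneg fun nj => Real.rpow_nonneg (abs_nonneg _) _)
        ?_ (by positivity)
      -- double sum bound
      have hsum : Summable fun nj : ℕ × ℕ => |xs.1 nj.1 (x nj.2)| ^ p := hmid xs.1 xs.2.1
      set G : ℕ × ℕ → ℝ := fun jn => |xs.1 jn.2 (x jn.1)| ^ p with hGdef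
      have hGsum : Summable G := by
        have := (Equiv.prodComm ℕ ℕ).summable_iff.2 hsum
        exact this
      have hG : HasSum (fun j => ∑' n, G (j, n)) (∑' jn, G jn) :=
        hGsum.hasSum.prod_fiberwise fun j => (hGsum.prod_factor j).hasSum
      have hswNorm : ∑' nj : ℕ × ℕ, |xs.1 nj.1 (x nj.2)| ^ p = ∑' jn, G jn :=
        ((Equiv.prodComm ℕ ℕ).tsum_eq fun nj : ℕ × ℕ => |xs.1 nj.1 (x nj.2)| ^ p).symm
      rw [hswNorm, ← hG.tsum_eq]
      apply Summable.tsum_le_tsum ?_ hG.summable hlp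
      intro j
      by_cases hxj : x j = 0
      · have : ∀ n : ℕ, G (j, n) = 0 := by
          intro n; simp [hGdef, hxj, Real.zero_rpow hp0.ne']
        rw [tsum_congr this, tsum_zero]
        positivity
      · have hxjn : (0:ℝ) < ‖x j‖ := norm_pos_iff.2 hxj
        set ev : (E →L[ℝ] ℝ) →L[ℝ] ℝ := ContinuousLinearMap.apply ℝ ℝ (x j) with hev
        set f : (E →L[ℝ] ℝ) →L[ℝ] ℝ := ‖x j‖⁻¹ • ev with hf
        have hfnorm : ‖f‖ ≤ 1 := by
          apply ContinuousLinearMap.opNorm_le_bound _ zero_le_one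
          intro φ
          have hfφ : f φ = ‖x j‖⁻¹ * φ (x j) := rfl
          rw [hfφ, Real.norm_eq_abs, abs_mul, abs_inv, abs_norm]
          have hφ : |φ (x j)| ≤ ‖φ‖ * ‖x j‖ := φ.le_opNorm (x j)
          calc ‖x j‖⁻¹ * |φ (x j)| ≤ ‖x j‖⁻¹ * (‖φ‖ * ‖x j‖) :=
                mul_le_mul_of_nonneg_left hφ (by positivity)
            _ = 1 * ‖φ‖ := by field_simp
            _ = _ := rfl
        have hle1 := tsum_le_one_of_wNorm_le_one hp xs.2.1 xs.2.2 f hfnorm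
        have hterm : ∀ n : ℕ, G (j, n) = ‖x j‖ ^ p * |f (xs.1 n)| ^ p := by
          intro n
          have : |xs.1 n (x j)| = ‖x j‖ * |f (xs.1 n)| := by
            rw [hf]
            simp only [ContinuousLinearMap.smul_apply, smul_eq_mul, abs_mul, abs_inv,
              abs_norm]
            rw [hev]
            rw [← mul_assoc, mul_inv_cancel₀ hxjn.ne', one_mul]
            rfl
          rw [hGdef]
          simp only
          rw [this, Real.mul_rpow (norm_nonneg _) (abs_nonneg _)]
        calc (∑' n, G (j, n)) = ‖x j‖ ^ p * ∑' n, |f (xs.1 n)| ^ p := by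
              rw [tsum_congr hterm, tsum_mul_left]
          _ ≤ ‖x j‖ ^ p * 1 := by
              apply mul_le_mul_of_nonneg_left hle1 (by positivity)
          _ = ‖x j‖ ^ p := mul_one _
    apply ciSup_le
    intro f
    set xs0 : ℕ → E →L[ℝ] ℝ := fun n => if n = 0 then f.1 else 0 with hxs0
    have hWS : WSummable p xs0 := by
      intro g
      apply summable_of_ne_finset_zero (s := ({0} : Finset ℕ))
      intro n hn
      simp only [Finset.mem_singleton] at hn
      simp [hxs0, hn, Real.zero_rpow hp0.ne']
    have hwn : wNorm p xs0 ≤ 1 := by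
      apply ciSup_le
      intro g
      apply Real.rpow_le_one (tsum_nonneg fun n => Real.rpow_nonneg (abs_nonneg _) _)
        ?_ (by positivity)
      rw [tsum_eq_sum (s := ({0} : Finset ℕ)) (by
        intro n hn
        simp only [Finset.mem_singleton] at hn
        simp [hxs0, hn, Real.zero_rpow hp0.ne'])]
      rw [Finset.sum_singleton]
      simp only [hxs0, if_pos rfl]
      apply Real.rpow_le_one (abs_nonneg _) ?_ hp0.le
      calc |g.1 f.1| ≤ ‖g.1‖ * ‖f.1‖ := g.1.le_opNorm _
        _ ≤ 1 * 1 := mul_le_mul g.2 f.2 (norm_nonneg _) zero_le_one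
        _ = 1 := one_mul _
    have hdbl : Summable fun nj : ℕ × ℕ => |xs0 nj.1 (x nj.2)| ^ p := hmid xs0 hWS
    have hfib : HasSum (fun n => ∑' j, |xs0 n (x j)| ^ p)
        (∑' nj : ℕ × ℕ, |xs0 nj.1 (x nj.2)| ^ p) :=
      hdbl.hasSum.prod_fiberwise fun n => (hdbl.prod_factor n).hasSum
    have hval : ∑' nj : ℕ × ℕ, |xs0 nj.1 (x nj.2)| ^ p = ∑' j, |f.1 (x j)| ^ p := by
      rw [← hfib.tsum_eq]
      rw [tsum_eq_sum (s := ({0} : Finset ℕ)) (by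
        intro n hn
        simp only [Finset.mem_singleton] at hn
        have : ∀ j : ℕ, |xs0 n (x j)| ^ p = 0 := by
          intro j; simp [hxs0, hn, Real.zero_rpow hp0.ne']
        rw [tsum_congr this, tsum_zero])]
      rw [Finset.sum_singleton]
      apply tsum_congr
      intro j
      simp [hxs0]
    unfold midNorm
    rw [← hval]
    exact le_ciSup hbdd (⟨xs0, hWS, hwn⟩ :
      {xs : ℕ → E →L[ℝ] ℝ // WSummable p xs ∧ wNorm p xs ≤ 1})
end
end

section
/- A bounded linear operator T : E → F is weakly mid (p;q)-summing (sends ℓ_q^w(E) into ℓ_p^mid(F)) if and only if there is a constant B > 0 such that (Σ_{n=1}^∞ Σ_{j=1}^k |y_n*(T(x_j))|^p)^{1/p} ≤ B ‖(x_j)_{j=1}^k‖_{w,q} ‖(y_n*)‖_{w,p} for every k, all x_1,…,x_k ∈ E, and every (y_n*) ∈ ℓ_p^w(F*); moreover the least such B equals the operator norm of the induced map ℓ_q^w(E) → ℓ_p^mid(F). -/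
open Filter

noncomputable section

/-!
By homogeneity, the finite inequality with constant `B` is equivalent to `midPair p T x y ≤ B`
on the product of the unit balls of `ℓ_q^w(E)` and `ℓ_p^w(F*)`. The finite inequality controls
every finite partial sum of the full double series, since such a sum lives in a square
`range k × range k` and truncating `x` does not increase its weak norm; hence `T` maps
`ℓ_q^w(E)` into `ℓ_p^mid(F)`. Conversely, a gliding hump shows that if no bound held, the double
series would diverge for some weakly summable pair. The supremum of the induced mid norms over the
unit ball is itself an admissible bound up to `ε`, so it is the least one.
-/

open Filter Topology Finset

section Summation

theorem hasSum_trunc {α H : Type*} [AddCommMonoid α] [TopologicalSpace α] [Zero H]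
    (g : H → α) (hg : g 0 = 0) (k : ℕ) (x : ℕ → H) :
    HasSum (fun j => g (trunc k x j)) (∑ j ∈ range k, g (x j)) := by
  have htrunc : ∑ j ∈ range k, g (x j) = ∑ j ∈ range k, g (trunc k x j) :=
    sum_congr rfl fun j hj => by simp [trunc, mem_range.1 hj]
  rw [htrunc]
  exact hasSum_sum_of_ne_finset_zero fun j hj => by simp [trunc, mt mem_range.2 hj, hg]

theorem sum_le_of_forall_tsum_sum_range_le {c : ℕ × ℕ → ℝ} (hc : 0 ≤ c)
    (hs : ∀ k, Summable fun n => ∑ j ∈ range k, c (n, j)) {M : ℝ}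
    (hM : ∀ k, ∑' n, ∑ j ∈ range k, c (n, j) ≤ M) (u : Finset (ℕ × ℕ)) :
    ∑ i ∈ u, c i ≤ M := by
  classical
  obtain ⟨K, hK⟩ := (u.image Prod.fst ∪ u.image Prod.snd).exists_nat_subset_range
  have hu : u ⊆ range K ×ˢ range K := subset_product.trans
    (product_subset_product (subset_union_left.trans hK) (subset_union_right.trans hK))
  calc ∑ i ∈ u, c i ≤ ∑ i ∈ range K ×ˢ range K, c i :=
        sum_le_sum_of_subset_of_nonneg hu fun i _ _ => hc i
    _ = ∑ n ∈ range K, ∑ j ∈ range K, c (n, j) := sum_product _ _ _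
    _ ≤ ∑' n, ∑ j ∈ range K, c (n, j) :=
        (hs K).sum_le_tsum _ fun n _ => sum_nonneg fun j _ => hc _
    _ ≤ M := hM K

theorem rpow_tsum_abs_mul {ι : Type*} {r : ℝ} (hr : r ≠ 0) (c : ℝ) (a : ι → ℝ) :
    (∑' i, |c * a i| ^ r) ^ (1 / r) = |c| * (∑' i, |a i| ^ r) ^ (1 / r) := by
  simp_rw [abs_mul, Real.mul_rpow (abs_nonneg c) (abs_nonneg _)]
  rw [tsum_mul_left, Real.mul_rpow (by positivity) (tsum_nonneg fun _ => by positivity),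
    ← Real.rpow_mul (abs_nonneg c), mul_one_div_cancel hr, Real.rpow_one]

theorem le_mul_mul_of_forall_pos_le {L B a b : ℝ}
    (h : ∀ ε > 0, L ≤ B * (a + ε) * (b + ε)) : L ≤ B * a * b := by
  have hlim : Tendsto (fun ε => B * (a + ε) * (b + ε)) (𝓝[>] 0) (𝓝 (B * a * b)) := by
    simpa using ((by fun_prop : Continuous fun ε : ℝ => B * (a + ε) * (b + ε)).tendsto 0).mono_left
      nhdsWithin_le_nhds
  exact ge_of_tendsto hlim (eventually_nhdsWithin_of_forall h)

end Summation

section WeakNorm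

variable {G H : Type*} [NormedAddCommGroup G] [NormedSpace ℝ G] [NormedAddCommGroup H]
  [NormedSpace ℝ H] {r : ℝ} {x : ℕ → G}

theorem WSummable.trunc (hr : r ≠ 0) (k : ℕ) (x : ℕ → G) : WSummable r (trunc k x) := fun f =>
  (hasSum_trunc (fun v => |f v| ^ r) (by simp [Real.zero_rpow hr]) k x).summable

theorem WSummable.smul (hx : WSummable r x) (c : ℝ) : WSummable r (c • x) := fun f =>
  ((hx f).mul_left (|c| ^ r)).congr fun j => by
    simp [abs_mul, Real.mul_rpow (abs_nonneg c) (abs_nonneg _)]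

theorem WSummable.map (hx : WSummable r x) (T : G →L[ℝ] H) : WSummable r fun j => T (x j) :=
  fun f => hx (f.comp T)

theorem WSummable.mono {s : ℝ} (hr : 0 < r) (hrs : r ≤ s) (hx : WSummable r x) :
    WSummable s x := fun f => by
  have hs : (ENNReal.ofReal s).toReal = s := ENNReal.toReal_ofReal (hr.le.trans hrs)
  have hmem : Memℓp (fun j => f (x j)) (ENNReal.ofReal r) :=
    memℓp_gen (by simpa [ENNReal.toReal_ofReal hr.le] using hx f)
  simpa [hs] using (hmem.of_exponent_ge (ENNReal.ofReal_le_ofReal hrs)).summable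
    (by simpa [hs] using hr.trans_le hrs)

theorem wNorm_nonneg_s13 (r : ℝ) (x : ℕ → G) : 0 ≤ wNorm r x :=
  Real.iSup_nonneg fun _ => by positivity

theorem wNorm_smul (hr : r ≠ 0) (c : ℝ) (x : ℕ → G) : wNorm r (c • x) = |c| * wNorm r x := by
  simp only [wNorm, Real.mul_iSup_of_nonneg (abs_nonneg c), ← rpow_tsum_abs_mul hr,
    Pi.smul_apply, map_smul, smul_eq_mul]

/-- By the closed graph theorem, `f ↦ (f (x j))ⱼ` is a bounded operator `G* → ℓ_r`. -/
theorem WSummable.bddAbove (hr : 1 ≤ r) (hx : WSummable r x) :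
    BddAbove (Set.range fun f : {f : G →L[ℝ] ℝ // ‖f‖ ≤ 1} =>
      (∑' j, |f.1 (x j)| ^ r) ^ (1 / r)) := by
  have hr0 : 0 < r := one_pos.trans_le hr
  have : Fact (1 ≤ ENNReal.ofReal r) := ⟨ENNReal.one_le_ofReal.2 hr⟩
  have hrr : (ENNReal.ofReal r).toReal = r := ENNReal.toReal_ofReal hr0.le
  let Φ : (G →L[ℝ] ℝ) →ₗ[ℝ] lp (fun _ : ℕ => ℝ) (ENNReal.ofReal r) :=
    { toFun := fun f => ⟨fun j => f (x j), memℓp_gen (by simpa [hrr] using hx f)⟩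
      map_add' := fun _ _ => rfl
      map_smul' := fun _ _ => rfl }
  let Ψ : (G →L[ℝ] ℝ) →L[ℝ] lp (fun _ : ℕ => ℝ) (ENNReal.ofReal r) :=
    ⟨Φ, Φ.continuous_of_seq_closed_graph fun u f z hu hz =>
      lp.ext <| funext fun j => tendsto_nhds_unique
        (((lp.evalCLM ℝ _ _ j).continuous.tendsto z).comp hz)
        (((ContinuousLinearMap.apply ℝ ℝ (x j)).continuous.tendsto f).comp hu)⟩
  refine ⟨‖Ψ‖, ?_⟩
  rintro _ ⟨⟨f, hf⟩, rfl⟩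
  have hnorm : ‖Ψ f‖ = (∑' j, |f (x j)| ^ r) ^ (1 / r) := by
    rw [lp.norm_eq_tsum_rpow (by rwa [hrr]), hrr]
    rfl
  show (∑' j, |f (x j)| ^ r) ^ (1 / r) ≤ ‖Ψ‖
  rw [← hnorm]
  exact (Ψ.le_opNorm f).trans (mul_le_of_le_one_right (norm_nonneg _) hf)

theorem WSummable.rpow_tsum_le (hr : 1 ≤ r) (hx : WSummable r x) (f : G →L[ℝ] ℝ) :
    (∑' j, |f (x j)| ^ r) ^ (1 / r) ≤ wNorm r x * ‖f‖ := by
  have hr0 : r ≠ 0 := (one_pos.trans_le hr).ne'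
  rcases eq_or_ne f 0 with rfl | hf
  · simp [Real.zero_rpow hr0, Real.zero_rpow (inv_ne_zero hr0)]
  have hunit : ‖(‖f‖⁻¹ • f)‖ ≤ 1 := (norm_smul_inv_norm hf).le
  calc (∑' j, |f (x j)| ^ r) ^ (1 / r)
      = ‖f‖ * (∑' j, |(‖f‖⁻¹ • f) (x j)| ^ r) ^ (1 / r) := by
        rw [← abs_norm f, ← rpow_tsum_abs_mul hr0]
        simp [norm_ne_zero_iff.2 hf]
    _ ≤ ‖f‖ * wNorm r x := by
        gcongr
        exact le_ciSup (hx.bddAbove hr) (⟨_, hunit⟩ : {f : G →L[ℝ] ℝ // ‖f‖ ≤ 1})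
    _ = wNorm r x * ‖f‖ := mul_comm _ _

theorem wNorm_trunc_le (hr : 1 ≤ r) (hx : WSummable r x) (k : ℕ) :
    wNorm r (trunc k x) ≤ wNorm r x := by
  have hr0 : 0 < r := one_pos.trans_le hr
  refine Real.iSup_le (fun ⟨f, hf⟩ => ?_) (wNorm_nonneg_s13 r x)
  have hg : |f 0| ^ r = 0 := by simp [Real.zero_rpow hr0.ne']
  calc (∑' j, |f (trunc k x j)| ^ r) ^ (1 / r)
      = (∑ j ∈ range k, |f (x j)| ^ r) ^ (1 / r) := by
        rw [(hasSum_trunc (fun v => |f v| ^ r) hg k x).tsum_eq]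
    _ ≤ (∑' j, |f (x j)| ^ r) ^ (1 / r) := by
        gcongr
        exact (hx f).sum_le_tsum _ fun _ _ => by positivity
    _ ≤ wNorm r x * ‖f‖ := hx.rpow_tsum_le hr f
    _ ≤ wNorm r x := mul_le_of_le_one_right (wNorm_nonneg_s13 r x) hf

theorem WSummable.tsum_le_of_wNorm_le_one (hr : 1 ≤ r) (hx : WSummable r x) (hx1 : wNorm r x ≤ 1)
    (f : G →L[ℝ] ℝ) : ∑' j, |f (x j)| ^ r ≤ ‖f‖ ^ r := by
  have hr0 : 0 < r := one_pos.trans_le hr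
  rw [← Real.rpow_inv_le_iff_of_pos (tsum_nonneg fun _ => by positivity) (norm_nonneg f) hr0,
    ← one_div]
  exact (hx.rpow_tsum_le hr f).trans (mul_le_of_le_one_left (norm_nonneg f) hx1)

theorem WSummable.blocks (hr : 1 ≤ r) (e : ℕ ≃ ℕ × ℕ) {w : ℕ → ℕ → G}
    (hw : ∀ m, WSummable r (w m)) (hw1 : ∀ m, wNorm r (w m) ≤ 1) {c : ℕ → ℝ}
    (hc : Summable fun m => |c m| ^ r) :
    WSummable r fun i => c (e i).1 • w (e i).1 (e i).2 := fun f => by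
  have hrow : ∀ m, ∑' j, |f (c m • w m j)| ^ r ≤ |c m| ^ r * ‖f‖ ^ r := fun m => by
    calc ∑' j, |f (c m • w m j)| ^ r = |c m| ^ r * ∑' j, |f (w m j)| ^ r := by
          simp_rw [map_smul, smul_eq_mul, abs_mul, Real.mul_rpow (abs_nonneg _) (abs_nonneg _)]
          exact tsum_mul_left
      _ ≤ |c m| ^ r * ‖f‖ ^ r := by
          gcongr
          exact (hw m).tsum_le_of_wNorm_le_one hr (hw1 m) f
  have hprod : Summable fun mj : ℕ × ℕ => |f (c mj.1 • w mj.1 mj.2)| ^ r :=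
    (summable_prod_of_nonneg fun _ => by positivity).2 ⟨fun m => (hw m).smul (c m) f,
      (hc.mul_right (‖f‖ ^ r)).of_nonneg_of_le (fun _ => tsum_nonneg fun _ => by positivity) hrow⟩
  exact e.summable_iff.2 hprod

theorem summable_abs_inv_two_pow_rpow (hr : 0 < r) :
    Summable fun m : ℕ => |((2 : ℝ) ^ m)⁻¹| ^ r := by
  simp_rw [abs_inv, abs_pow, abs_two, ← inv_pow,
    ← Real.rpow_pow_comm (by norm_num : (0 : ℝ) ≤ 2⁻¹)]
  exact summable_geometric_of_lt_one (by positivity)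
    (Real.rpow_lt_one (by norm_num) (by norm_num) hr)

end WeakNorm

section Pairing

variable {E F : Type*} [NormedAddCommGroup E] [NormedSpace ℝ E] [NormedAddCommGroup F]
  [NormedSpace ℝ F] {p q B : ℝ} {T : E →L[ℝ] F} {x : ℕ → E} {y : ℕ → F →L[ℝ] ℝ}

/-- The summand of `midNorm p (T ∘ x)` at the functional sequence `y`. -/
def midPair (p : ℝ) (T : E →L[ℝ] F) (x : ℕ → E) (y : ℕ → F →L[ℝ] ℝ) : ℝ :=
  (∑' nj : ℕ × ℕ, |y nj.1 (T (x nj.2))| ^ p) ^ (1 / p)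

def MidSummingBound (p q : ℝ) (T : E →L[ℝ] F) (B : ℝ) : Prop :=
  ∀ (k : ℕ) (x : ℕ → E) (y : ℕ → F →L[ℝ] ℝ), WSummable p y →
    (∑' n : ℕ, ∑ j ∈ range k, |y n (T (x j))| ^ p) ^ (1 / p) ≤
      B * wNorm q (trunc k x) * wNorm p y

def UnitBallBound (p q : ℝ) (T : E →L[ℝ] F) (B : ℝ) : Prop :=
  ∀ (x : ℕ → E) (y : ℕ → F →L[ℝ] ℝ), WSummable q x → wNorm q x ≤ 1 →
    WSummable p y → wNorm p y ≤ 1 → midPair p T x y ≤ B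

theorem WSummable.summable_sum_range (hy : WSummable p y) (z : ℕ → F) (k : ℕ) :
    Summable fun n => ∑ j ∈ range k, |y n (z j)| ^ p :=
  summable_sum fun j _ => hy (ContinuousLinearMap.apply ℝ ℝ (z j))

theorem midPair_smul (hp : p ≠ 0) (c d : ℝ) (x : ℕ → E) (y : ℕ → F →L[ℝ] ℝ) :
    midPair p T (c • x) (d • y) = |d * c| * midPair p T x y := by
  have hterm : ∀ nj : ℕ × ℕ, (d • y) nj.1 (T ((c • x) nj.2)) = d * c * y nj.1 (T (x nj.2)) :=
    fun nj => by simp; ring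
  simp only [midPair, hterm]
  exact rpow_tsum_abs_mul hp _ _

theorem hasSum_midPair_trunc (hp : p ≠ 0) (hy : WSummable p y) (k : ℕ) :
    HasSum (fun nj : ℕ × ℕ => |y nj.1 (T (trunc k x nj.2))| ^ p)
      (∑' n, ∑ j ∈ range k, |y n (T (x j))| ^ p) := by
  have hrow : ∀ n, HasSum (fun j => |y n (T (trunc k x j))| ^ p)
      (∑ j ∈ range k, |y n (T (x j))| ^ p) := fun n =>
    hasSum_trunc (fun v => |y n (T v)| ^ p) (by simp [Real.zero_rpow hp]) k x
  have hsum : Summable fun nj : ℕ × ℕ => |y nj.1 (T (trunc k x nj.2))| ^ p :=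
    (summable_prod_of_nonneg fun _ => by positivity).2 ⟨fun n => (hrow n).summable,
      by simpa only [(hrow _).tsum_eq] using hy.summable_sum_range (fun j => T (x j)) k⟩
  rw [← tsum_congr fun n => (hrow n).tsum_eq, ← hsum.tsum_prod' fun n => (hrow n).summable]
  exact hsum.hasSum

theorem MidSummingBound.sum_le (hB : MidSummingBound p q T B) (hB0 : 0 ≤ B) (hp : 0 < p)
    (hq : 1 ≤ q) (hx : WSummable q x) (hy : WSummable p y) (u : Finset (ℕ × ℕ)) :
    ∑ nj ∈ u, |y nj.1 (T (x nj.2))| ^ p ≤ (B * wNorm q x * wNorm p y) ^ p := by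
  have ha := wNorm_nonneg_s13 q x
  have hb := wNorm_nonneg_s13 p y
  refine sum_le_of_forall_tsum_sum_range_le (c := fun nj => |y nj.1 (T (x nj.2))| ^ p)
    (fun _ => by positivity) (hy.summable_sum_range (fun j => T (x j))) (fun k => ?_) u
  rw [← Real.rpow_inv_le_iff_of_pos (tsum_nonneg fun _ => by positivity) (by positivity) hp,
    ← one_div]
  refine (hB k x y hy).trans ?_
  gcongr
  exact wNorm_trunc_le hq hx k

theorem MidSummingBound.summable (hB : MidSummingBound p q T B) (hB0 : 0 ≤ B) (hp : 0 < p)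
    (hq : 1 ≤ q) (hx : WSummable q x) (hy : WSummable p y) :
    Summable fun nj : ℕ × ℕ => |y nj.1 (T (x nj.2))| ^ p :=
  summable_of_sum_le (fun _ => by positivity) (hB.sum_le hB0 hp hq hx hy)

theorem MidSummingBound.unitBallBound (hB : MidSummingBound p q T B) (hB0 : 0 ≤ B) (hp : 0 < p)
    (hq : 1 ≤ q) : UnitBallBound p q T B := fun x y hx hx1 hy hy1 => by
  have ha := wNorm_nonneg_s13 q x
  have hb := wNorm_nonneg_s13 p y
  have hsum : ∑' nj : ℕ × ℕ, |y nj.1 (T (x nj.2))| ^ p ≤ (B * wNorm q x * wNorm p y) ^ p :=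
    tsum_le_of_sum_le' (by positivity) (hB.sum_le hB0 hp hq hx hy)
  rw [← Real.rpow_inv_le_iff_of_pos (tsum_nonneg fun _ => by positivity) (by positivity) hp,
    ← one_div] at hsum
  calc midPair p T x y ≤ B * wNorm q x * wNorm p y := hsum
    _ ≤ B * 1 * 1 := by gcongr
    _ = B := by ring

theorem UnitBallBound.mono {B' : ℝ} (hB : UnitBallBound p q T B) (hBB' : B ≤ B') :
    UnitBallBound p q T B' := fun x y hx hx1 hy hy1 => (hB x y hx hx1 hy hy1).trans hBB'

/-- Normalise `trunc k x` and `y` by their weak norms plus `ε` (the norms may vanish) and let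
`ε → 0`. -/
theorem UnitBallBound.midSummingBound (hB : UnitBallBound p q T B) (hp : p ≠ 0) (hq : q ≠ 0) :
    MidSummingBound p q T B := fun k x y hy => by
  set a := wNorm q (trunc k x)
  set b := wNorm p y
  have ha := wNorm_nonneg_s13 q (trunc k x)
  have hb := wNorm_nonneg_s13 p y
  refine le_mul_mul_of_forall_pos_le fun ε hε => ?_
  have hxε : wNorm q ((a + ε)⁻¹ • trunc k x) ≤ 1 := by
    rw [wNorm_smul hq, abs_of_pos (by positivity), inv_mul_le_one₀ (by positivity)]
    linarith
  have hyε : wNorm p ((b + ε)⁻¹ • y) ≤ 1 := by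
    rw [wNorm_smul hp, abs_of_pos (by positivity), inv_mul_le_one₀ (by positivity)]
    linarith
  have h := hB _ _ ((WSummable.trunc hq k x).smul _) hxε (hy.smul _) hyε
  rw [midPair_smul hp, midPair, (hasSum_midPair_trunc hp hy k).tsum_eq,
    abs_of_pos (by positivity), ← mul_inv, inv_mul_le_iff₀ (by positivity)] at h
  linarith

end Pairing

section GlidingHump

variable {E F : Type*} [NormedAddCommGroup E] [NormedSpace ℝ E] [NormedAddCommGroup F]
  [NormedSpace ℝ F] {p q : ℝ} {T : E →L[ℝ] F}

/-- Gliding hump: pairs `(x m, y m)` from the unit balls with `midPair > 4 ^ m` are glued along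
`ℕ ≃ ℕ × ℕ`, with weights `2⁻ᵐ`, into `X ∈ ℓ_q^w(E)` and `Y ∈ ℓ_p^w(F*)`; the `m`-th diagonal
block then contributes more than `1` to the double series of `(X, Y)`. -/
theorem exists_unitBallBound (hp : 1 ≤ p) (hq : 1 ≤ q)
    (H : ∀ x : ℕ → E, WSummable q x → MidSummable p fun j => T (x j)) :
    ∃ B, 0 < B ∧ UnitBallBound p q T B := by
  by_contra! h
  have hp0 : 0 < p := one_pos.trans_le hp
  have hviol : ∀ m : ℕ, ∃ x y, WSummable q x ∧ wNorm q x ≤ 1 ∧ WSummable p y ∧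
      wNorm p y ≤ 1 ∧ 2 ^ m * 2 ^ m < midPair p T x y := fun m => by
    simpa [UnitBallBound] using h (2 ^ m * 2 ^ m) (by positivity)
  choose x y hx hx1 hy hy1 hxy using hviol
  let c : ℕ → ℝ := fun m => ((2 : ℝ) ^ m)⁻¹
  let e : ℕ ≃ ℕ × ℕ := Nat.pairEquiv.symm
  let X : ℕ → E := fun i => c (e i).1 • x (e i).1 (e i).2
  let Y : ℕ → F →L[ℝ] ℝ := fun i => c (e i).1 • y (e i).1 (e i).2
  have hX : WSummable q X :=
    WSummable.blocks hq e hx hx1 (summable_abs_inv_two_pow_rpow (one_pos.trans_le hq))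
  have hY : WSummable p Y := WSummable.blocks hp e hy hy1 (summable_abs_inv_two_pow_rpow hp0)
  let Φ : ℕ × ℕ × ℕ → ℕ × ℕ := fun mnj => (e.symm (mnj.1, mnj.2.1), e.symm (mnj.1, mnj.2.2))
  have hΦ : Φ.Injective := fun a b hab => by
    simp only [Φ, Prod.ext_iff, e.symm.injective.eq_iff] at hab
    exact Prod.ext hab.1.1 (Prod.ext hab.1.2 hab.2.2)
  have hrows := (((H X hX).2 Y hY).comp_injective hΦ).prod
  have hblock : ∀ m, 1 < midPair p T (c m • x m) (c m • y m) := fun m => by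
    rw [midPair_smul hp0.ne', abs_of_pos (by positivity)]
    calc (1 : ℝ) = c m * c m * (2 ^ m * 2 ^ m) := by simp only [c]; field_simp
      _ < c m * c m * midPair p T (x m) (y m) := by gcongr; exact hxy m
  obtain ⟨m, hm⟩ := (hrows.tendsto_atTop_zero.eventually (gt_mem_nhds one_pos)).exists
  have hgt := hblock m
  rw [midPair, one_div, Real.lt_rpow_inv_iff_of_pos zero_le_one
    (tsum_nonneg fun _ => by positivity) hp0, Real.one_rpow] at hgt
  simp only [Function.comp, Φ, X, Y, Equiv.apply_symm_apply] at hm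
  exact lt_asymm hm hgt

end GlidingHump

section InducedNorm

variable {E F : Type*} [NormedAddCommGroup E] [NormedSpace ℝ E] [NormedAddCommGroup F]
  [NormedSpace ℝ F] {p q B : ℝ} {T : E →L[ℝ] F}

theorem UnitBallBound.midNorm_le (hB : UnitBallBound p q T B) (hB0 : 0 ≤ B) {x : ℕ → E}
    (hx : WSummable q x) (hx1 : wNorm q x ≤ 1) : midNorm p (fun j => T (x j)) ≤ B :=
  Real.iSup_le (fun y => hB x y.1 hx hx1 y.2.1 y.2.2) hB0

theorem UnitBallBound.iSup_midNorm_le (hB : UnitBallBound p q T B) (hB0 : 0 ≤ B) :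
    (⨆ x : {x : ℕ → E // WSummable q x ∧ wNorm q x ≤ 1}, midNorm p fun j => T (x.1 j)) ≤ B :=
  Real.iSup_le (fun x => hB.midNorm_le hB0 x.2.1 x.2.2) hB0

theorem UnitBallBound.iSup_midNorm (hB : UnitBallBound p q T B) (hB0 : 0 ≤ B) :
    UnitBallBound p q T
      (⨆ x : {x : ℕ → E // WSummable q x ∧ wNorm q x ≤ 1}, midNorm p fun j => T (x.1 j)) :=
  fun x y hx hx1 hy hy1 =>
    (le_ciSup ⟨B, by rintro _ ⟨y', rfl⟩; exact hB x y'.1 hx hx1 y'.2.1 y'.2.2⟩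
      (⟨y, hy, hy1⟩ : {y : ℕ → F →L[ℝ] ℝ // WSummable p y ∧ wNorm p y ≤ 1})).trans
    (le_ciSup ⟨B, by rintro _ ⟨x', rfl⟩; exact hB.midNorm_le hB0 x'.2.1 x'.2.2⟩
      (⟨x, hx, hx1⟩ : {x : ℕ → E // WSummable q x ∧ wNorm q x ≤ 1}))

end InducedNorm

theorem stmt_13_general {E F : Type*} [NormedAddCommGroup E] [NormedSpace ℝ E]
    [NormedAddCommGroup F] [NormedSpace ℝ F]
    (p q : ℝ) (hq : 1 ≤ q) (hqp : q ≤ p) (T : E →L[ℝ] F) :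
    ((∀ x : ℕ → E, WSummable q x → MidSummable p fun j => T (x j)) ↔
      ∃ B : ℝ, 0 < B ∧ ∀ (k : ℕ) (x : ℕ → E) (y : ℕ → F →L[ℝ] ℝ), WSummable p y →
        (∑' n : ℕ, ∑ j ∈ Finset.range k, |y n (T (x j))| ^ p) ^ (1 / p) ≤
          B * wNorm q (trunc k x) * wNorm p y) ∧
    ((∀ x : ℕ → E, WSummable q x → MidSummable p fun j => T (x j)) →
      (⨆ x : {x : ℕ → E // WSummable q x ∧ wNorm q x ≤ 1},
          midNorm p fun j => T (x.1 j)) =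
        sInf {B : ℝ | 0 < B ∧ ∀ (k : ℕ) (x : ℕ → E) (y : ℕ → F →L[ℝ] ℝ), WSummable p y →
          (∑' n : ℕ, ∑ j ∈ Finset.range k, |y n (T (x j))| ^ p) ^ (1 / p) ≤
            B * wNorm q (trunc k x) * wNorm p y}) := by
  have hp : 1 ≤ p := hq.trans hqp
  have hp0 : 0 < p := one_pos.trans_le hp
  have hq0 : 0 < q := one_pos.trans_le hq
  refine ⟨⟨fun H => ?_, fun ⟨B, hB0, hB⟩ x hx => ?_⟩, fun H => ?_⟩
  · obtain ⟨B, hB0, hB⟩ := exists_unitBallBound hp hq H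
    exact ⟨B, hB0, hB.midSummingBound hp0.ne' hq0.ne'⟩
  · exact ⟨(hx.map T).mono hq0 hqp, fun y hy => MidSummingBound.summable hB hB0.le hp0 hq hx hy⟩
  · obtain ⟨B₀, hB₀0, hB₀⟩ := exists_unitBallBound hp hq H
    have hS0 : 0 ≤ ⨆ x : {x : ℕ → E // WSummable q x ∧ wNorm q x ≤ 1},
        midNorm p fun j => T (x.1 j) :=
      Real.iSup_nonneg fun _ => Real.iSup_nonneg fun _ => by positivity
    refine le_antisymm (le_csInf ⟨B₀, hB₀0, hB₀.midSummingBound hp0.ne' hq0.ne'⟩ ?_)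
      (le_of_forall_pos_le_add fun ε hε => csInf_le ⟨0, fun B hB => hB.1.le⟩ ⟨by positivity, ?_⟩)
    · rintro B ⟨hB0, hB⟩
      exact (MidSummingBound.unitBallBound hB hB0.le hp0 hq).iSup_midNorm_le hB0.le
    · exact ((hB₀.iSup_midNorm hB₀0.le).mono (le_add_of_nonneg_right hε.le)).midSummingBound
        hp0.ne' hq0.ne'

/-- `T` is weakly mid `(p;q)`-summing (maps `ℓ_q^w(E)` into `ℓ_p^{mid}(F)`)
iff there is `B > 0` with
`(Σ_n Σ_{j<k} |y_n*(T x_j)|^p)^{1/p} ≤ B ‖(x_j)_{j<k}‖_{w,q} ‖(y_n*)‖_{w,p}`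
for all `k`, all `x_1, …, x_k` and all `(y_n*) ∈ ℓ_p^w(F*)`; moreover the norm of the
induced map (the sup over the unit ball of `ℓ_q^w(E)`) is the least such `B`. -/
theorem stmt_13 {E F : Type*} [NormedAddCommGroup E] [NormedSpace ℝ E] [CompleteSpace E]
    [NormedAddCommGroup F] [NormedSpace ℝ F] [CompleteSpace F]
    (p q : ℝ) (hq : 1 ≤ q) (hqp : q ≤ p) (T : E →L[ℝ] F) :
    ((∀ x : ℕ → E, WSummable q x → MidSummable p fun j => T (x j)) ↔
      ∃ B : ℝ, 0 < B ∧ ∀ (k : ℕ) (x : ℕ → E) (y : ℕ → F →L[ℝ] ℝ), WSummable p y →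
        (∑' n : ℕ, ∑ j ∈ Finset.range k, |y n (T (x j))| ^ p) ^ (1 / p) ≤
          B * wNorm q (trunc k x) * wNorm p y) ∧
    ((∀ x : ℕ → E, WSummable q x → MidSummable p fun j => T (x j)) →
      (⨆ x : {x : ℕ → E // WSummable q x ∧ wNorm q x ≤ 1},
          midNorm p fun j => T (x.1 j)) =
        sInf {B : ℝ | 0 < B ∧ ∀ (k : ℕ) (x : ℕ → E) (y : ℕ → F →L[ℝ] ℝ), WSummable p y →
          (∑' n : ℕ, ∑ j ∈ Finset.range k, |y n (T (x j))| ^ p) ^ (1 / p) ≤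
            B * wNorm q (trunc k x) * wNorm p y}) :=
  stmt_13_general p q hq hqp T
end
end

section
/- If 1 ≤ p < q < ∞, then the only bounded linear operator T : E → F that maps every sequence in ℓ_q^mid(E) to a sequence in ℓ_p(F) is the zero operator; likewise the only operator mapping ℓ_q^w(E) into ℓ_p^mid(F) is the zero operator. -/
open Filter

noncomputable section

/-! The sequence `c j • x` with `c j = (j + 1) ^ (-1/p)` is weakly and even mid `q`-summable
for every `q > p`, since its scalar part has `|c j| ^ q = (j + 1) ^ (-q/p)`. Its image under `T`
is `c j • T x`, and `Σ |c j| ^ p` is the harmonic series; so as soon as `T x ≠ 0`, neither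
`Σ ‖c j • T x‖ ^ p` nor `Σ |g (c j • T x)| ^ p` (for a norming functional `g`) converges. -/

theorem summable_abs_rpow_neg_inv_rpow_iff {p : ℝ} (hp : 0 < p) (r : ℝ) :
    Summable (fun j : ℕ => |((j : ℝ) + 1) ^ (-p⁻¹)| ^ r) ↔ p < r := by
  have hterm : ∀ j : ℕ, |((j : ℝ) + 1) ^ (-p⁻¹)| ^ r = 1 / |(j : ℝ) + 1| ^ (r / p) := by
    intro j
    have hj : (0 : ℝ) ≤ (j : ℝ) + 1 := by positivity
    rw [abs_of_nonneg (Real.rpow_nonneg hj _), abs_of_nonneg hj, ← Real.rpow_mul hj,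
      neg_mul, Real.rpow_neg hj, one_div, inv_mul_eq_div]
  simp only [hterm, Real.summable_one_div_nat_add_rpow, one_lt_div hp]

section ScalarMultiples

variable {E : Type*} [NormedAddCommGroup E] [NormedSpace ℝ E]

theorem abs_apply_smul_rpow (f : E →L[ℝ] ℝ) (c : ℝ) (x : E) (p : ℝ) :
    |f (c • x)| ^ p = |c| ^ p * |f x| ^ p := by
  rw [map_smul, smul_eq_mul, abs_mul, Real.mul_rpow (abs_nonneg _) (abs_nonneg _)]

theorem memLpSeq_smul_const_iff {p : ℝ} (c : ℕ → ℝ) {y : E} (hy : y ≠ 0) :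
    MemLpSeq p (fun j => c j • y) ↔ Summable fun j => |c j| ^ p := by
  have hy' : ‖y‖ ^ p ≠ 0 := (Real.rpow_pos_of_pos (norm_pos_iff.mpr hy) p).ne'
  simp only [MemLpSeq, norm_smul, Real.norm_eq_abs,
    Real.mul_rpow (abs_nonneg _) (norm_nonneg _), summable_mul_right_iff hy']

theorem wSummable_smul_const {p : ℝ} {c : ℕ → ℝ} (hc : Summable fun j => |c j| ^ p) (x : E) :
    WSummable p (fun j => c j • x) := fun f => by
  simpa only [abs_apply_smul_rpow] using hc.mul_right (|f x| ^ p)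

theorem wSummable_smul_const_iff {p : ℝ} (c : ℕ → ℝ) {y : E} (hy : y ≠ 0) :
    WSummable p (fun j => c j • y) ↔ Summable fun j => |c j| ^ p := by
  refine ⟨fun h => ?_, fun h => wSummable_smul_const h y⟩
  obtain ⟨g, -, hg⟩ := exists_dual_vector ℝ y (norm_ne_zero_iff.mpr hy)
  have hgy : |g y| ^ p ≠ 0 := by
    rw [hg, RCLike.ofReal_real_eq_id, id, abs_norm]
    exact (Real.rpow_pos_of_pos (norm_pos_iff.mpr hy) p).ne'
  exact (summable_mul_right_iff hgy).mp (by simpa only [abs_apply_smul_rpow] using h g)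

theorem midSummable_smul_const {p : ℝ} {c : ℕ → ℝ} (hc : Summable fun j => |c j| ^ p) (x : E) :
    MidSummable p (fun j => c j • x) := by
  refine ⟨wSummable_smul_const hc x, fun xs hxs => ?_⟩
  have hxs_x : Summable fun n => |xs n x| ^ p := hxs (ContinuousLinearMap.apply ℝ ℝ x)
  refine (hxs_x.mul_of_nonneg hc (fun _ => by positivity) (fun _ => by positivity)).congr
    fun nj => ?_
  rw [abs_apply_smul_rpow, mul_comm]

end ScalarMultiples

theorem stmt_15_general {E F : Type*} [NormedAddCommGroup E] [NormedSpace ℝ E]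
    [NormedAddCommGroup F] [NormedSpace ℝ F]
    (p q : ℝ) (hp : 1 ≤ p) (hpq : p < q) (T : E →L[ℝ] F) :
    ((∀ x : ℕ → E, MidSummable q x → MemLpSeq p fun j => T (x j)) → T = 0) ∧
    ((∀ x : ℕ → E, WSummable q x → MidSummable p fun j => T (x j)) → T = 0) := by
  have hp0 : 0 < p := zero_lt_one.trans_le hp
  set c : ℕ → ℝ := fun j => ((j : ℝ) + 1) ^ (-p⁻¹)
  have hcq : Summable fun j => |c j| ^ q := (summable_abs_rpow_neg_inv_rpow_iff hp0 q).mpr hpq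
  have hcp : ¬ Summable fun j => |c j| ^ p :=
    fun h => lt_irrefl p ((summable_abs_rpow_neg_inv_rpow_iff hp0 p).mp h)
  have hT_smul : ∀ x : E, (fun j => T (c j • x)) = fun j => c j • T x := fun x => by
    simp only [map_smul]
  constructor
  · intro H
    ext x
    by_contra hTx
    refine hcp ((memLpSeq_smul_const_iff c hTx).mp ?_)
    simpa only [hT_smul] using H _ (midSummable_smul_const hcq x)
  · intro H
    ext x
    by_contra hTx
    refine hcp ((wSummable_smul_const_iff c hTx).mp ?_)
    simpa only [hT_smul] using (H _ (midSummable_smul_const hcq x).1).1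

/-- if `1 ≤ p < q`, then the only operator mapping `ℓ_q^{mid}(E)` into
`ℓ_p(F)` is the zero operator, and likewise the only operator mapping `ℓ_q^w(E)` into
`ℓ_p^{mid}(F)` is the zero operator. -/
theorem stmt_15 {E F : Type*} [NormedAddCommGroup E] [NormedSpace ℝ E] [CompleteSpace E]
    [NormedAddCommGroup F] [NormedSpace ℝ F] [CompleteSpace F]
    (p q : ℝ) (hp : 1 ≤ p) (hpq : p < q) (T : E →L[ℝ] F) :
    ((∀ x : ℕ → E, MidSummable q x → MemLpSeq p fun j => T (x j)) → T = 0) ∧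
    ((∀ x : ℕ → E, WSummable q x → MidSummable p fun j => T (x j)) → T = 0) :=
  stmt_15_general p q hp hpq T
end
end

section
/- For a Banach space E and 1 ≤ p < ∞, the following are equivalent: (a) ℓ_p^mid(E) = ℓ_p^w(E); (b) every bounded linear operator from E to any Banach space F is absolutely p-summing whenever it maps ℓ_p^mid(E) into ℓ_p(F) (i.e., Π_p^mid(E;F) = Π_p(E;F) for all F); (c) Π_p^mid(E;ℓ_p) = Π_p(E;ℓ_p) = L(E;ℓ_p); (d) every bounded operator from any Banach space F into E maps ℓ_p^w(F) into ℓ_p^mid(E); (e) the identity of E maps ℓ_p^w(E) into ℓ_p^mid(E). -/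
open Filter

noncomputable section

/-!
A weakly `p`-summable sequence `(x*_n)` in `E*` is the same thing as an operator
`E → ℓ_p`, `x ↦ (x*_n x)_n`, and the double sum in the definition of `ℓ_p^{mid}(E)` is
`Σ_j ‖T x_j‖^p` for that operator `T`. Hence `x` is mid `p`-summable iff every `T : E → ℓ_p`
maps it into `ℓ_p(ℓ_p)`, which gives (a) ⇔ (b) ⇔ (c) ⇔ (e). For (d) ⇒ (e), a weakly
`p`-summable `x` is lifted through an operator: with `Λ : E* → ℓ_p`, `f ↦ (f x_j)_j`, the
transpose `Λ* : ℓ_p* → E**` sends the coordinate functional `e*_j` to `x_j`, so it maps the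
closed subspace `K = (Λ*)⁻¹(E)` into `E`, and `(e*_j)` is weakly `p`-summable in `K` by Hölder.
Working in `K ⊆ ℓ_p*` rather than in `E` keeps the auxiliary space in `Type`, as (d) requires.
-/

open scoped ENNReal

theorem rpow_le_of_le_mul_rpow {p t M : ℝ} (hp : 0 < p) (ht : 0 ≤ t) (hM : 0 ≤ M)
    (h : t ≤ M * t ^ (1 - p⁻¹)) : t ≤ M ^ p := by
  rcases ht.eq_or_lt with rfl | ht
  · positivity
  have hsplit : t = t ^ p⁻¹ * t ^ (1 - p⁻¹) := by
    rw [← Real.rpow_add ht, add_sub_cancel, Real.rpow_one]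
  have hroot : t ^ p⁻¹ ≤ M :=
    le_of_mul_le_mul_right (hsplit.symm.trans_le h) (Real.rpow_pos_of_pos ht _)
  calc t = (t ^ p⁻¹) ^ p := by rw [← Real.rpow_mul ht.le, inv_mul_cancel₀ hp.ne', Real.rpow_one]
    _ ≤ M ^ p := by gcongr

/-- `|b| ^ p / |b|` stands for `|b| ^ (p - 1)`, but is `0` at `b = 0` (division by zero), also
for `p = 1`; this is what makes the extremal Hölder coefficients below uniform in `1 ≤ p`. -/
theorem sum_rpow_div_mul_le {p : ℝ} (hp : 1 ≤ p) (S : Finset ℕ) (b z : ℕ → ℝ) :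
    ∑ k ∈ S, |b k| ^ p / |b k| * |z k| ≤
      (∑ k ∈ S, |b k| ^ p) ^ (1 - p⁻¹) * (∑ k ∈ S, |z k| ^ p) ^ p⁻¹ := by
  have holder := Real.inner_le_weight_mul_Lp_of_nonneg S hp (fun k => |b k| ^ p)
    (fun k => |z k| / |b k|) (fun k => by positivity) (fun k => by positivity)
  simp only [← mul_comm_div] at holder
  refine holder.trans ?_
  gcongr with k
  rcases eq_or_ne (b k) 0 with hb | hb
  · simp only [hb, abs_zero, Real.zero_rpow (by linarith : p ≠ 0), zero_mul]
    positivity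
  · rw [Real.div_rpow (abs_nonneg _) (abs_nonneg _), mul_div_cancel₀]
    exact (Real.rpow_pos_of_pos (abs_pos.2 hb) p).ne'

theorem WSummable.map_s16 {E F : Type*} [NormedAddCommGroup E] [NormedSpace ℝ E]
    [NormedAddCommGroup F] [NormedSpace ℝ F] {p : ℝ} {x : ℕ → E} (hx : WSummable p x)
    (T : E →L[ℝ] F) : WSummable p fun j => T (x j) :=
  fun f => hx (f.comp T)

theorem WSummable.of_coe {E : Type*} [NormedAddCommGroup E] [NormedSpace ℝ E] {p : ℝ}
    {K : Submodule ℝ E} {y : ℕ → K} (hy : WSummable p fun j => (y j : E)) : WSummable p y := by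
  intro f
  obtain ⟨g, hg, -⟩ := exists_extension_norm_eq K f
  simpa only [hg] using hy g

theorem LinearIsometry.exists_clm_comp_eq {𝕜 E F G : Type*} [NontriviallyNormedField 𝕜]
    [NormedAddCommGroup E] [NormedSpace 𝕜 E] [NormedAddCommGroup F] [NormedSpace 𝕜 F]
    [SeminormedAddCommGroup G] [NormedSpace 𝕜 G] (ι : E →ₗᵢ[𝕜] G) (Φ : F →L[𝕜] G)
    (h : ∀ u, Φ u ∈ Set.range ι) : ∃ T : F →L[𝕜] E, ∀ u, ι (T u) = Φ u :=
  let Ψ := Φ.codRestrict (LinearMap.range ι.toLinearMap) fun u => LinearMap.mem_range.2 (h u)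
  ⟨(ι.equivRange.symm.toContinuousLinearEquiv : _ →L[𝕜] E).comp Ψ,
    fun u => congrArg Subtype.val (ι.equivRange.apply_symm_apply (Ψ u))⟩

@[simp]
theorem lp.evalCLM_apply {α 𝕜 : Type*} {E : α → Type*} [NormedRing 𝕜]
    [∀ i, NormedAddCommGroup (E i)] [∀ i, Module 𝕜 (E i)] [∀ i, IsBoundedSMul 𝕜 (E i)]
    {p : ℝ≥0∞} [Fact (1 ≤ p)] (i : α) (f : lp E p) : lp.evalCLM 𝕜 E p i f = f i :=
  rfl

local notation:max "ℓ^" p:max => lp (fun _ : ℕ => ℝ) (ENNReal.ofReal p)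

section lp

variable {p : ℝ} [Fact (1 ≤ ENNReal.ofReal p)]

theorem summable_prod_rpow_iff_memLpSeq (v : ℕ → ℓ^p) :
    (Summable fun kj : ℕ × ℕ => |v kj.2 kj.1| ^ p) ↔ MemLpSeq p v := by
  have hp : 0 < p := zero_lt_one.trans_le (ENNReal.one_le_ofReal.1 Fact.out)
  have hp' : 0 < (ENNReal.ofReal p).toReal := by rwa [ENNReal.toReal_ofReal hp.le]
  have hrow (j : ℕ) : Summable fun k => |v j k| ^ p := by
    simpa [Real.norm_eq_abs, ENNReal.toReal_ofReal hp.le] using (lp.memℓp (v j)).summable hp'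
  have hnorm (j : ℕ) : ∑' k, |v j k| ^ p = ‖v j‖ ^ p := by
    simpa [Real.norm_eq_abs, ENNReal.toReal_ofReal hp.le] using (lp.norm_rpow_eq_tsum hp' (v j)).symm
  rw [← (Equiv.prodComm ℕ ℕ).summable_iff]
  refine (summable_prod_of_nonneg fun _ => Real.rpow_nonneg (abs_nonneg _) _).trans ?_
  simp only [Equiv.prodComm_apply, Prod.swap_prod_mk, hnorm]
  exact ⟨And.right, And.intro hrow⟩

def lpPi {G : Type*} [NormedAddCommGroup G] [NormedSpace ℝ G] [CompleteSpace G]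
    (f : ℕ → StrongDual ℝ G) (hf : ∀ z, Summable fun k => |f k z| ^ p) : G →L[ℝ] ℓ^p :=
  let L : G →ₗ[ℝ] ℓ^p :=
    { toFun := fun z => ⟨fun k => f k z, memℓp_gen <| by
        simpa [Real.norm_eq_abs, ENNReal.toReal_ofReal
          (zero_le_one.trans (ENNReal.one_le_ofReal.1 Fact.out))] using hf z⟩
      map_add' := fun z w => lp.ext <| funext fun k => map_add (f k) z w
      map_smul' := fun c z => lp.ext <| funext fun k => map_smul (f k) c z }
  ⟨L, L.continuous_of_seq_closed_graph fun u z w hu hw => lp.ext <| funext fun k =>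
    tendsto_nhds_unique (((lp.evalCLM ℝ _ _ k).continuous.tendsto w).comp hw)
      (((f k).continuous.tendsto z).comp hu)⟩

theorem norm_sum_smul_evalCLM_le (S : Finset ℕ) (b : ℕ → ℝ) :
    ‖∑ k ∈ S, (|b k| ^ p / b k) • lp.evalCLM ℝ (fun _ : ℕ => ℝ) (ENNReal.ofReal p) k‖ ≤
      (∑ k ∈ S, |b k| ^ p) ^ (1 - p⁻¹) := by
  have hp : 1 ≤ p := ENNReal.one_le_ofReal.1 Fact.out
  have hp' : 0 < (ENNReal.ofReal p).toReal := by rw [ENNReal.toReal_ofReal (by linarith)]; linarith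
  refine ContinuousLinearMap.opNorm_le_bound _ (by positivity) fun z => ?_
  have hz : (∑ k ∈ S, |z k| ^ p) ^ p⁻¹ ≤ ‖z‖ := by
    have hsum := lp.sum_rpow_le_norm_rpow hp' z S
    simp only [ENNReal.toReal_ofReal (by linarith : 0 ≤ p), Real.norm_eq_abs] at hsum
    calc _ ≤ (‖z‖ ^ p) ^ p⁻¹ := by gcongr
      _ = ‖z‖ := Real.rpow_rpow_inv (norm_nonneg _) (by linarith)
  calc ‖(∑ k ∈ S, (|b k| ^ p / b k) • lp.evalCLM ℝ (fun _ : ℕ => ℝ) (ENNReal.ofReal p) k) z‖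
      = |∑ k ∈ S, (|b k| ^ p / b k) * z k| := by
        simp [Real.norm_eq_abs]
    _ ≤ ∑ k ∈ S, |b k| ^ p / |b k| * |z k| := by
        refine (Finset.abs_sum_le_sum_abs _ _).trans_eq (Finset.sum_congr rfl fun k _ => ?_)
        rw [abs_mul, abs_div, abs_of_nonneg (by positivity : 0 ≤ |b k| ^ p)]
    _ ≤ (∑ k ∈ S, |b k| ^ p) ^ (1 - p⁻¹) * (∑ k ∈ S, |z k| ^ p) ^ p⁻¹ :=
        sum_rpow_div_mul_le hp S b z
    _ ≤ (∑ k ∈ S, |b k| ^ p) ^ (1 - p⁻¹) * ‖z‖ := by gcongr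

theorem wSummable_evalCLM : WSummable p (lp.evalCLM ℝ (fun _ : ℕ => ℝ) (ENNReal.ofReal p)) := by
  have hp : 1 ≤ p := ENNReal.one_le_ofReal.1 Fact.out
  intro φ
  refine summable_of_sum_le (c := ‖φ‖ ^ p) (fun _ => by positivity) fun S => ?_
  set b : ℕ → ℝ := fun k => φ (lp.evalCLM ℝ _ _ k)
  set g := ∑ k ∈ S, (|b k| ^ p / b k) • lp.evalCLM ℝ (fun _ : ℕ => ℝ) (ENNReal.ofReal p) k
  refine rpow_le_of_le_mul_rpow (by linarith) (by positivity) (norm_nonneg φ) ?_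
  calc ∑ k ∈ S, |b k| ^ p = φ g := by
        simp only [g, map_sum, map_smul, smul_eq_mul]
        refine Finset.sum_congr rfl fun k _ => ?_
        rcases eq_or_ne (b k) 0 with hb | hb
        · simp [hb, Real.zero_rpow (by linarith : p ≠ 0)]
        · exact (div_mul_cancel₀ _ hb).symm
    _ ≤ ‖φ‖ * ‖g‖ := (Real.le_norm_self _).trans (φ.le_opNorm g)
    _ ≤ ‖φ‖ * (∑ k ∈ S, |b k| ^ p) ^ (1 - p⁻¹) := by gcongr; exact norm_sum_smul_evalCLM_le S b

end lp

section MidSummable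

variable {E : Type*} [NormedAddCommGroup E] [NormedSpace ℝ E] {p : ℝ}
  [Fact (1 ≤ ENNReal.ofReal p)] {x : ℕ → E}

theorem MidSummable.memLpSeq_map (hx : MidSummable p x) (T : E →L[ℝ] ℓ^p) :
    MemLpSeq p fun j => T (x j) := by
  have hxs := wSummable_evalCLM.map_s16 ((ContinuousLinearMap.compL ℝ E ℓ^p ℝ).flip T)
  have hsum := hx.2 _ hxs
  rw [← summable_prod_rpow_iff_memLpSeq]
  exact hsum

theorem WSummable.midSummable_of_forall_memLpSeq [CompleteSpace E] (hx : WSummable p x)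
    (h : ∀ T : E →L[ℝ] ℓ^p, MemLpSeq p fun j => T (x j)) : MidSummable p x :=
  ⟨hx, fun xs hxs =>
    let T := lpPi xs fun z => hxs (NormedSpace.inclusionInDoubleDual ℝ E z)
    (summable_prod_rpow_iff_memLpSeq fun j => T (x j)).2 (h T)⟩

theorem WSummable.exists_clm_lift [CompleteSpace E] (hx : WSummable p x) :
    ∃ (K : Submodule ℝ (StrongDual ℝ ℓ^p)) (_ : IsClosed (K : Set (StrongDual ℝ ℓ^p)))
      (y : ℕ → K) (T : K →L[ℝ] E), WSummable p y ∧ ∀ j, T (y j) = x j := by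
  let ι := NormedSpace.inclusionInDoubleDualLi ℝ (E := E)
  obtain ⟨Φ, hΦ⟩ : ∃ Φ : StrongDual ℝ ℓ^p →L[ℝ] StrongDual ℝ (StrongDual ℝ E),
      ∀ j, Φ (lp.evalCLM ℝ _ _ j) = ι (x j) :=
    ⟨(ContinuousLinearMap.compL ℝ _ ℓ^p ℝ).flip (lpPi (fun j => ι (x j)) hx), fun j => rfl⟩
  let K : Submodule ℝ (StrongDual ℝ ℓ^p) := (LinearMap.range ι.toLinearMap).comap Φ.toLinearMap
  have hrange : IsClosed (Set.range ι) := ι.isometry.isUniformInducing.isComplete_range.isClosed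
  have hK : IsClosed (K : Set (StrongDual ℝ ℓ^p)) := hrange.preimage Φ.continuous
  have hKΦ (u : K) : Φ u ∈ Set.range ι := u.2
  obtain ⟨T, hT⟩ := LinearIsometry.exists_clm_comp_eq (𝕜 := ℝ) (F := K)
    (G := StrongDual ℝ (StrongDual ℝ E)) ι (Φ.comp K.subtypeL) hKΦ
  let y : ℕ → K := fun j => ⟨lp.evalCLM ℝ (fun _ : ℕ => ℝ) (ENNReal.ofReal p) j, x j, (hΦ j).symm⟩
  refine ⟨K, hK, y, T, WSummable.of_coe wSummable_evalCLM, fun j => ι.injective ?_⟩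
  rw [hT]
  exact hΦ j

end MidSummable

theorem stmt_16_general {E : Type*} [NormedAddCommGroup E] [NormedSpace ℝ E] [CompleteSpace E]
    (p : ℝ) [Fact (1 ≤ ENNReal.ofReal p)] :
    List.TFAE
      [ -- (a) `E` is a weak mid `p`-space
        ∀ x : ℕ → E, MidSummable p x ↔ WSummable p x,
        -- (b) `Π_p^{mid}(E;F) = Π_p(E;F)` for every Banach space `F`
        ∀ (F : Type) (_ : NormedAddCommGroup F), ∀ (_ : NormedSpace ℝ F),
          ∀ (_ : CompleteSpace F), ∀ T : E →L[ℝ] F,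
          ((∀ x : ℕ → E, MidSummable p x → MemLpSeq p fun j => T (x j)) ↔
            (∀ x : ℕ → E, WSummable p x → MemLpSeq p fun j => T (x j))),
        -- (c) `Π_p^{mid}(E;ℓ_p) = Π_p(E;ℓ_p) = L(E;ℓ_p)`
        ∀ T : E →L[ℝ] lp (fun _ : ℕ => ℝ) (ENNReal.ofReal p),
          (∀ x : ℕ → E, MidSummable p x → MemLpSeq p fun j => T (x j)) ∧
          (∀ x : ℕ → E, WSummable p x → MemLpSeq p fun j => T (x j)),
        -- (d) `W_p^{mid}(F;E) = L(F;E)` for every Banach space `F`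
        ∀ (F : Type) (_ : NormedAddCommGroup F), ∀ (_ : NormedSpace ℝ F),
          ∀ (_ : CompleteSpace F), ∀ T : F →L[ℝ] E,
          ∀ x : ℕ → F, WSummable p x → MidSummable p fun j => T (x j),
        -- (e) `id_E` is weakly mid `p`-summing
        ∀ x : ℕ → E, WSummable p x → MidSummable p x ] := by
  tfae_have 1 → 2 := fun h1 F _ _ _ T =>
    ⟨fun hT x hx => hT x ((h1 x).2 hx), fun hT x hx => hT x hx.1⟩
  tfae_have 2 → 3 := fun h2 T =>
    have hmid x (hx : MidSummable p x) := hx.memLpSeq_map T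
    ⟨hmid, (h2 _ _ _ inferInstance T).1 hmid⟩
  tfae_have 3 → 5 := fun h3 x hx => hx.midSummable_of_forall_memLpSeq fun T => (h3 T).2 x hx
  tfae_have 5 → 1 := fun h5 x => ⟨And.left, h5 x⟩
  tfae_have 5 → 4 := fun h5 F _ _ _ T x hx => h5 _ (hx.map_s16 T)
  tfae_have 4 → 5 := by
    intro h4 x hx
    obtain ⟨K, hK, y, T, hy, hTy⟩ := hx.exists_clm_lift
    have : CompleteSpace K := hK.completeSpace_coe
    simpa only [hTy] using h4 K _ _ inferInstance T y hy
  tfae_finish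

/-- characterizations of weak mid `p`-spaces. For a Banach space `E` the
following are equivalent: (a) `ℓ_p^{mid}(E) = ℓ_p^w(E)`; (b) `Π_p^{mid}(E;F) = Π_p(E;F)`
for every Banach space `F`; (c) `Π_p^{mid}(E;ℓ_p) = Π_p(E;ℓ_p) = L(E;ℓ_p)`;
(d) `W_p^{mid}(F;E) = L(F;E)` for every Banach space `F`; (e) `id_E ∈ W_p^{mid}(E;E)`. -/
theorem stmt_16 {E : Type*} [NormedAddCommGroup E] [NormedSpace ℝ E] [CompleteSpace E]
    (p : ℝ) (hp : 1 ≤ p) [Fact (1 ≤ ENNReal.ofReal p)] :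
    List.TFAE
      [ -- (a) `E` is a weak mid `p`-space
        ∀ x : ℕ → E, MidSummable p x ↔ WSummable p x,
        -- (b) `Π_p^{mid}(E;F) = Π_p(E;F)` for every Banach space `F`
        ∀ (F : Type) (_ : NormedAddCommGroup F), ∀ (_ : NormedSpace ℝ F),
          ∀ (_ : CompleteSpace F), ∀ T : E →L[ℝ] F,
          ((∀ x : ℕ → E, MidSummable p x → MemLpSeq p fun j => T (x j)) ↔
            (∀ x : ℕ → E, WSummable p x → MemLpSeq p fun j => T (x j))),
        -- (c) `Π_p^{mid}(E;ℓ_p) = Π_p(E;ℓ_p) = L(E;ℓ_p)`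
        ∀ T : E →L[ℝ] lp (fun _ : ℕ => ℝ) (ENNReal.ofReal p),
          (∀ x : ℕ → E, MidSummable p x → MemLpSeq p fun j => T (x j)) ∧
          (∀ x : ℕ → E, WSummable p x → MemLpSeq p fun j => T (x j)),
        -- (d) `W_p^{mid}(F;E) = L(F;E)` for every Banach space `F`
        ∀ (F : Type) (_ : NormedAddCommGroup F), ∀ (_ : NormedSpace ℝ F),
          ∀ (_ : CompleteSpace F), ∀ T : F →L[ℝ] E,
          ∀ x : ℕ → F, WSummable p x → MidSummable p fun j => T (x j),
        -- (e) `id_E` is weakly mid `p`-summing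
        ∀ x : ℕ → E, WSummable p x → MidSummable p x ] :=
  stmt_16_general p
end
end
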